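/- arXiv:1911.06648 — 5 statements merged into one kernel-verified Lean document; each statement's English description precedes it below -/
import Mathlib

section
/- Let (R,M) be a local ring, let 𝔞 be an ideal of R, and let {𝔟_i}_{i ∈ I} be a family of ideals of R indexed by a set I such that 𝔞 ⊆ ⋃_{i ∈ I} 𝔟_i. Suppose the residue field R/M is infinite and |R/M| > |I|. Then 𝔞 ⊆ 𝔟_i for some i ∈ I. -/
/-- (Generalized prime avoidance.) Let `(R, M)` be a local ring, `𝔞` an
ideal of `R`, and `{𝔟 i}_{i ∈ ι}` a family of ideals with `𝔞 ⊆ ⋃ i, 𝔟 i`. If `R/M` is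
infinite and `|R/M| > |ι|`, then `𝔞 ⊆ 𝔟 i` for some `i`. -/
theorem stmt_3 {R : Type u} [CommRing R] [IsLocalRing R] [IsNoetherianRing R]
    (𝔞 : Ideal R) {ι : Type u} (𝔟 : ι → Ideal R)
    (hcover : (𝔞 : Set R) ⊆ ⋃ i : ι, (𝔟 i : Set R))
    (hinf : Infinite (R ⧸ IsLocalRing.maximalIdeal R))
    (hcard : Cardinal.mk ι < Cardinal.mk (R ⧸ IsLocalRing.maximalIdeal R)) :
    ∃ i : ι, 𝔞 ≤ 𝔟 i := by
  classical
  set M := IsLocalRing.maximalIdeal R with hM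
  obtain ⟨n, a, ha⟩ := Submodule.fg_iff_exists_fin_generating_family.mp
    (IsNoetherian.noetherian 𝔞)
  have hsurj : Function.Surjective (Ideal.Quotient.mk M) := Ideal.Quotient.mk_surjective
  set f : (R ⧸ M) → R := Function.surjInv hsurj with hf
  have hfs : ∀ t, Ideal.Quotient.mk M (f t) = t := fun t => Function.surjInv_eq hsurj t
  have hamem : ∀ k, a k ∈ 𝔞 := fun k => by
    rw [← ha]; exact Submodule.subset_span ⟨k, rfl⟩
  set x : (R ⧸ M) → R := fun t => ∑ k : Fin n, (f t) ^ (k : ℕ) * a k with hx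
  have hxa : ∀ t, x t ∈ 𝔞 := fun t =>
    Ideal.sum_mem _ fun k _ => Ideal.mul_mem_left _ _ (hamem k)
  have hchoice : ∀ t, ∃ i, x t ∈ 𝔟 i := fun t => by
    have := hcover (hxa t); simpa using this
  choose g hg using hchoice
  -- find an infinite fiber of g
  have hfib : ∃ i, Infinite (g ⁻¹' {i}) := by
    rcases finite_or_infinite ι with hι | hι
    · exact Finite.exists_infinite_fiber g
    · exact @Cardinal.exists_infinite_fiber' _ _ g hcard hι
  obtain ⟨i, hi⟩ := hfib
  refine ⟨i, ?_⟩
  -- n distinct points in the fiber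
  let E := Infinite.natEmbedding (g ⁻¹' {i})
  set t : Fin n → R ⧸ M := fun j => (E j.1).1 with htdef
  have ht_inj : Function.Injective t := fun j k hjk => by
    have : (E j.1) = (E k.1) := Subtype.ext hjk
    exact Fin.ext (E.injective this)
  have ht_fib : ∀ j, g (t j) = i := fun j => (E j.1).2
  -- Vandermonde matrix
  set v : Fin n → R := fun j => f (t j) with hv
  set V : Matrix (Fin n) (Fin n) R := Matrix.vandermonde v with hV
  have hunit : ∀ j k : Fin n, j ≠ k → IsUnit (v k - v j) := by
    intro j k hjk
    rw [← IsLocalRing.notMem_maximalIdeal, ← hM]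
    intro hmem
    have : Ideal.Quotient.mk M (v k - v j) = 0 := Ideal.Quotient.eq_zero_iff_mem.mpr hmem
    rw [map_sub, hfs, hfs, sub_eq_zero] at this
    exact hjk (ht_inj this.symm)
  have hdet : IsUnit V.det := by
    rw [hV, Matrix.det_vandermonde]
    refine Finset.prod_induction _ IsUnit (fun _ _ => IsUnit.mul) isUnit_one ?_
    intro j _
    refine Finset.prod_induction _ IsUnit (fun _ _ => IsUnit.mul) isUnit_one ?_
    intro k hk
    exact hunit j k (Finset.mem_Ioi.mp hk).ne
  have hWV : V⁻¹ * V = 1 := Matrix.nonsing_inv_mul V hdet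
  have hxmem : ∀ j : Fin n, V.mulVec a j ∈ 𝔟 i := by
    intro j
    have heq : V.mulVec a j = x (t j) := by
      simp [Matrix.mulVec, dotProduct, hV, Matrix.vandermonde, hx, hv]
    rw [heq]
    have := hg (t j)
    rwa [ht_fib j] at this
  have hamem' : ∀ k, a k ∈ 𝔟 i := by
    intro k
    have h1 : V⁻¹.mulVec (V.mulVec a) = a := by
      rw [Matrix.mulVec_mulVec, hWV, Matrix.one_mulVec]
    have h2 : a k = ∑ j, V⁻¹ k j * V.mulVec a j := by
      conv_lhs => rw [← h1]
      rfl
    rw [h2]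
    exact Ideal.sum_mem _ fun j _ => Ideal.mul_mem_left _ _ (hxmem j)
  rw [← ha, Submodule.span_le]
  rintro _ ⟨k, rfl⟩
  exact hamem' k
end

section
/- Let (T,M) be a complete local ring with M not an associated prime ideal of T, and let R be a PB-subring of T. If J is an ideal of T which is not contained in any single associated prime ideal of T, then there exists an element x ∈ J such that for every associated prime ideal P of T, the image of x in T/P is transcendental over the canonical image of R in T/P. (Equivalently, J is not contained in the union ⋃{r + P : P ∈ Ass(T), r ∈ D}, where for each P ∈ Ass(T), D contains a full set of coset representatives of the cosets of T/P that are algebraic over the image of R.) -/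
open Cardinal Polynomial IsLocalRing

section Aux

/-- Cardinality bound for algebraic elements over a subring of a domain. -/
lemma mk_setOf_isAlgebraic_le {K : Type*} [CommRing K] [IsDomain K] (S : Subring K) :
    #{x : K | IsAlgebraic S x} ≤ max (#S) ℵ₀ := by
  have hinj : Function.Injective (algebraMap S K) := Subtype.val_injective
  have hsub : {x : K | IsAlgebraic S x} ⊆
      ⋃ p : {p : S[X] // p ≠ 0}, {x : K | aeval x (p : S[X]) = 0} := by
    rintro x ⟨p, hp, hpx⟩
    exact Set.mem_iUnion.2 ⟨⟨p, hp⟩, hpx⟩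
  refine le_trans (Cardinal.mk_le_mk_of_subset hsub) (le_trans (Cardinal.mk_iUnion_le _) ?_)
  have hfin : ∀ p : {p : S[X] // p ≠ 0}, #{x : K | aeval x (p : S[X]) = 0} ≤ ℵ₀ := by
    intro p
    have : {x : K | aeval x (p : S[X]) = 0}
        = {x : K | IsRoot ((p : S[X]).map (algebraMap S K)) x} := by
      ext x
      simp [Polynomial.IsRoot, Polynomial.eval_map, Polynomial.aeval_def]
    rw [this]
    exact le_of_lt ((Polynomial.finite_setOf_isRoot
      ((Polynomial.map_ne_zero_iff hinj).2 p.2)).lt_aleph0)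
  have hne : Nonempty {p : S[X] // p ≠ 0} := ⟨⟨1, one_ne_zero⟩⟩
  have hsup : ⨆ p : {p : S[X] // p ≠ 0}, #{x : K | aeval x (p : S[X]) = 0} ≤ ℵ₀ :=
    ciSup_le' hfin
  have hidx : #{p : S[X] // p ≠ 0} ≤ max (#S) ℵ₀ :=
    le_trans (Cardinal.mk_subtype_le _) (Polynomial.cardinalMk_le_max)
  calc #{p : S[X] // p ≠ 0} * (⨆ p : {p : S[X] // p ≠ 0}, #{x : K | aeval x (p : S[X]) = 0})
      ≤ max (#S) ℵ₀ * ℵ₀ := mul_le_mul' hidx hsup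
    _ = max (#S) ℵ₀ := by
        rw [Cardinal.mul_eq_max (le_max_right _ _) le_rfl]
        simp [max_assoc]

/-- Cardinality of the image subring is at most that of the source. -/
lemma mk_subring_map_le {A B : Type v} [CommRing A] [CommRing B] (f : A →+* B) (R : Subring A) :
    #(R.map f) ≤ #R := by
  have h : ((R.map f : Subring B) : Set B) = f '' (R : Set A) := Subring.coe_map f R
  calc #(R.map f) = #(f '' (R : Set A)) := Cardinal.mk_congr (Equiv.setCongr h)
    _ ≤ #R := Cardinal.mk_image_le

/-- Finiteness of the set of associated primes of a Noetherian ring (as a module over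
itself), via the Lasker--Noether theorem. -/
lemma assPrimes_finite {T : Type*} [CommRing T] [IsNoetherianRing T] :
    (associatedPrimes T T).Finite := by
  classical
  obtain ⟨t, htinf, htprimary⟩ : ∃ t : Finset (Ideal T), t.inf id = ⊥ ∧ ∀ ⦃J⦄, J ∈ t → J.IsPrimary :=
    Ideal.isLasker T T ⊥
  apply Set.Finite.subset (t.image Ideal.radical).finite_toSet
  intro P hP
  obtain ⟨hPprime, x, hx⟩ := isAssociatedPrime_iff.1 hP
  have hmem : ∀ r : T, r ∈ P ↔ r * x = 0 := by
    intro r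
    rw [hx, Submodule.mem_colon_singleton, Submodule.mem_bot, smul_eq_mul]
  have hxne : x ≠ 0 := by
    rintro rfl
    exact hPprime.ne_top (Ideal.eq_top_iff_one _ |>.2 ((hmem 1).2 (by ring)))
  have hbot : ∀ y : T, (∀ Q ∈ t, y ∈ Q) → y = 0 := by
    intro y hy
    have : y ∈ t.inf id := by
      rw [Submodule.mem_finsetInf]
      simpa using hy
    rwa [htinf, Ideal.mem_bot] at this
  have key : (t.filter (fun Q => x ∉ Q)).inf Ideal.radical ≤ P := by
    intro r hr
    have hrQ : ∀ Q ∈ t, x ∉ Q → ∃ n, r ^ n ∈ Q := by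
      intro Q hQ hxQ
      have : r ∈ Q.radical := by
        have := Finset.inf_le (s := t.filter (fun Q => x ∉ Q)) (f := Ideal.radical)
          (Finset.mem_filter.2 ⟨hQ, by simpa using hxQ⟩)
        exact this hr
      exact this
    choose! n hn using fun Q (h : Q ∈ t) (h2 : x ∉ Q) => hrQ Q h h2
    set N := t.sup n with hN
    have hrN : ∀ Q ∈ t, r ^ N * x ∈ Q := by
      intro Q hQ
      by_cases hxQ : x ∈ Q
      · exact Ideal.mul_mem_left _ _ hxQ
      · have h1 : r ^ n Q ∈ Q := hn Q hQ hxQ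
        have h2 : n Q ≤ N := Finset.le_sup hQ
        have : r ^ N = r ^ (N - n Q) * r ^ n Q := by
          rw [← pow_add]; congr 1; omega
        rw [this, mul_assoc]
        exact Ideal.mul_mem_left _ _ (Ideal.mul_mem_right _ _ h1)
    have : r ^ N * x = 0 := hbot _ hrN
    exact hPprime.mem_of_pow_mem N ((hmem _).2 this)
  obtain ⟨Q, hQf, hQle⟩ := (hPprime.inf_le').1 key
  have hQt := (Finset.mem_filter.1 hQf).1
  have hxQ : x ∉ Q := by simpa using (Finset.mem_filter.1 hQf).2
  have hle2 : P ≤ Q.radical := by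
    intro r hrP
    have hrx : x * r ∈ Q := by
      rw [mul_comm]
      have : r * x = 0 := (hmem r).1 hrP
      rw [this]; exact Q.zero_mem
    rcases ((Ideal.isPrimary_iff).1 (htprimary hQt)).2 hrx with h | h
    · exact absurd h hxQ
    · exact h
  exact Finset.mem_coe.2 (Finset.mem_image.2 ⟨Q, hQt, le_antisymm hQle hle2⟩)

variable {T : Type*} [CommRing T] [IsLocalRing T] [IsNoetherianRing T]

/-- Ideals are closed in the maximal-adic topology of a Noetherian local ring. -/
lemma mem_of_forall_mem_sup_pow (I : Ideal T) (hI : I ≠ ⊤)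
    {x : T} (hx : ∀ n : ℕ, x ∈ I ⊔ (maximalIdeal T) ^ n) : x ∈ I := by
  haveI : Nontrivial (T ⧸ I) := Ideal.Quotient.nontrivial_iff.mpr hI
  haveI : IsLocalRing (T ⧸ I) := .of_surjective' _ Ideal.Quotient.mk_surjective
  set q := Ideal.Quotient.mk I
  set N := (maximalIdeal T).map q with hN
  have hNtop : N ≠ ⊤ := by
    intro h
    have h2 : Ideal.comap q N = ⊤ := by rw [h, Ideal.comap_top]
    rw [hN, Ideal.comap_map_of_surjective q Ideal.Quotient.mk_surjective] at h2
    have : maximalIdeal T ⊔ Ideal.comap q ⊥ ≤ maximalIdeal T := by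
      apply sup_le le_rfl
      rw [← RingHom.ker_eq_comap_bot, Ideal.mk_ker]
      exact le_maximalIdeal hI
    rw [h2] at this
    exact (maximalIdeal.isMaximal T).ne_top (top_le_iff.1 this)
  have hq : ∀ n : ℕ, q x ∈ N ^ n := by
    intro n
    rcases Submodule.mem_sup.1 (hx n) with ⟨a, ha, b, hb, rfl⟩
    have : q a = 0 := Ideal.Quotient.eq_zero_iff_mem.2 ha
    rw [map_add, this, zero_add, hN, ← Ideal.map_pow]
    exact Ideal.mem_map_of_mem q hb
  have : q x ∈ ⨅ n : ℕ, N ^ n := Ideal.mem_iInf.2 hq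
  rw [Ideal.iInf_pow_eq_bot_of_isLocalRing N hNtop] at this
  exact Ideal.Quotient.eq_zero_iff_mem.1 (Ideal.mem_bot.1 this)

lemma exists_not_mem_sup_pow (I : Ideal T) (hI : I ≠ ⊤) {x : T} (hx : x ∉ I) :
    ∃ n : ℕ, x ∉ I ⊔ (maximalIdeal T) ^ n := by
  by_contra h
  push_neg at h
  exact hx (mem_of_forall_mem_sup_pow I hI h)

/-- Heitmann-style countable coset avoidance in a complete Noetherian local ring. -/
lemma coset_avoidance [IsAdicComplete (maximalIdeal T) T]
    {ι : Type*} [Countable ι] (P : ι → Ideal T) (r : ι → T)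
    (hprime : ∀ i, (P i).IsPrime) (hPM : ∀ i, P i ≠ maximalIdeal T)
    (J : Ideal T) (hJP : ∀ i, ¬ J ≤ P i) :
    ∃ x ∈ J, ∀ i, x - r i ∉ P i := by
  classical
  cases isEmpty_or_nonempty ι with
  | inl h => exact ⟨0, J.zero_mem, fun i => (h.false i).elim⟩
  | inr h =>
  obtain ⟨e, he⟩ := exists_surjective_nat ι
  set M := maximalIdeal T with hM
  set Q : ℕ → Ideal T := fun k => P (e k) with hQ
  set s : ℕ → T := fun k => r (e k) with hs
  have hQtop : ∀ k, Q k ≠ ⊤ := fun k => (hprime (e k)).ne_top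
  set Inv : ℕ → T × ℕ → Prop :=
    fun k p => p.1 ∈ J ∧ k ≤ p.2 ∧ ∀ j < k, p.1 - s j ∉ Q j ⊔ M ^ p.2 with hInvDef
  have hstep : ∀ (k : ℕ) (p : T × ℕ), ∃ p' : T × ℕ,
      Inv k p → (Inv (k + 1) p' ∧ p'.1 - p.1 ∈ M ^ p.2 ∧ p.2 < p'.2) := by
    intro k p
    by_cases hp : Inv k p
    swap
    · exact ⟨p, fun h => absurd h hp⟩
    obtain ⟨hxJ, hkn, hav⟩ := hp
    set x := p.1
    set n := p.2
    have hz : ∃ z ∈ M ^ n * J, x + z - s k ∉ Q k := by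
      by_contra hcon
      push_neg at hcon
      have h0 : x - s k ∈ Q k := by simpa using hcon 0 (Submodule.zero_mem _)
      have hsub : M ^ n * J ≤ Q k := by
        intro z hzmem
        have h1 : x + z - s k ∈ Q k := hcon z hzmem
        have : (x + z - s k) - (x - s k) ∈ Q k := (Q k).sub_mem h1 h0
        simpa using this
      rcases (hprime (e k)).mul_le.1 hsub with h | h
      · have hMQ : M ≤ Q k := by
          intro y hy
          exact (hprime (e k)).mem_of_pow_mem n (h (Ideal.pow_mem_pow hy n))
        exact hPM (e k) (le_antisymm (le_maximalIdeal (hQtop k)) hMQ)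
      · exact hJP (e k) h
    obtain ⟨z, hzmem, hznotin⟩ := hz
    set x' := x + z with hx'
    have hx'J : x' ∈ J := J.add_mem hxJ (Ideal.mul_le_right hzmem)
    have hzMn : z ∈ M ^ n := Ideal.mul_le_left hzmem
    have hav' : ∀ j ≤ k, x' - s j ∉ Q j := by
      intro j hj
      rcases lt_or_eq_of_le hj with hlt | hEq
      · intro hmem
        have h1 : x' - s j ∈ Q j ⊔ M ^ n := Ideal.mem_sup_left hmem
        have h2 : x - s j ∈ Q j ⊔ M ^ n := by
          have : (x' - s j) - z ∈ Q j ⊔ M ^ n :=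
            Submodule.sub_mem _ h1 (Ideal.mem_sup_right hzMn)
          simpa [hx', add_sub_right_comm] using this
        exact hav j hlt h2
      · subst hEq
        simpa [hx', add_sub_right_comm] using hznotin
    have hm : ∀ j, ∃ m : ℕ, j ≤ k → x' - s j ∉ Q j ⊔ M ^ m := by
      intro j
      by_cases hj : j ≤ k
      · obtain ⟨m, hm⟩ := exists_not_mem_sup_pow (Q j) (hQtop j) (hav' j hj)
        exact ⟨m, fun _ => hm⟩
      · exact ⟨0, fun h => absurd h hj⟩
    choose m hmspec using hm
    set n' := max (n + 1) ((Finset.range (k + 1)).sup m) with hn'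
    refine ⟨(x', n'), fun _ => ⟨⟨hx'J, ?_, ?_⟩, by simpa [hx'] using hzMn, ?_⟩⟩
    · exact le_sup_of_le_left (Nat.succ_le_succ hkn)
    · intro j hj
      have hjk : j ≤ k := by omega
      have h1 : x' - s j ∉ Q j ⊔ M ^ (m j) := hmspec j hjk
      intro hmem
      apply h1
      have hle : M ^ n' ≤ M ^ (m j) :=
        Ideal.pow_le_pow_right
          (le_trans (Finset.le_sup (Finset.mem_range.2 (by omega))) (le_max_right _ _))
      exact (sup_le_sup_left hle (Q j) : Q j ⊔ M ^ n' ≤ Q j ⊔ M ^ (m j)) hmem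
    · exact lt_of_lt_of_le (Nat.lt_succ_self n) (le_max_left _ _)
  set F : ℕ → T × ℕ := fun k => Nat.rec ((0 : T), (0 : ℕ)) (fun k ih => (hstep k ih).choose) k
    with hF
  have hFs : ∀ k, F (k + 1) = (hstep k (F k)).choose := fun k => rfl
  have hInv : ∀ k, Inv k (F k) := by
    intro k
    induction k with
    | zero => exact ⟨J.zero_mem, le_rfl, fun j hj => absurd hj (Nat.not_lt_zero j)⟩
    | succ k ih =>
      rw [hFs]
      exact ((hstep k (F k)).choose_spec ih).1
  have hrel : ∀ k, (F (k + 1)).1 - (F k).1 ∈ M ^ (F k).2 ∧ (F k).2 < (F (k + 1)).2 := by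
    intro k
    rw [hFs]
    exact ((hstep k (F k)).choose_spec (hInv k)).2
  have hmono : Monotone (fun k => (F k).2) :=
    monotone_nat_of_le_succ fun k => le_of_lt (hrel k).2
  have hge : ∀ k, k ≤ (F k).2 := fun k => (hInv k).2.1
  have hdiff : ∀ k l, k ≤ l → (F l).1 - (F k).1 ∈ M ^ (F k).2 := by
    intro k l hkl
    induction l with
    | zero =>
      have : k = 0 := Nat.le_zero.1 hkl
      subst this; simpa using (Submodule.zero_mem _)
    | succ l ih =>
      rcases Nat.lt_or_ge k (l + 1) with hlt | hge'
      · have hkl' : k ≤ l := by omega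
        have h1 := ih hkl'
        have h2 : (F (l + 1)).1 - (F l).1 ∈ M ^ (F k).2 :=
          Ideal.pow_le_pow_right (hmono hkl') (hrel l).1
        have := Submodule.add_mem _ h2 h1
        simpa [sub_add_sub_cancel] using this
      · have : k = l + 1 := by omega
        subst this; simpa using (Submodule.zero_mem _)
  have hcauchy : ∀ {a b : ℕ}, a ≤ b → (fun k => (F k).1) a ≡ (fun k => (F k).1) b
      [SMOD (M ^ a • ⊤ : Submodule T T)] := by
    intro a b hab
    rw [SModEq.sub_mem]
    have : (F b).1 - (F a).1 ∈ M ^ a := by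
      have h1 := hdiff a b hab
      exact Ideal.pow_le_pow_right (hge a) h1
    simpa using (Submodule.neg_mem _ this)
  obtain ⟨L, hL⟩ := IsPrecomplete.prec (IsAdicComplete.toIsPrecomplete (I := M)) hcauchy
  have hLk : ∀ k, L - (F k).1 ∈ M ^ k := by
    intro k
    have := (SModEq.sub_mem).1 (hL k)
    simpa using (Submodule.neg_mem _ this)
  have hLk' : ∀ k, L - (F k).1 ∈ M ^ (F k).2 := by
    intro k
    set n := (F k).2
    have h1 : L - (F n).1 ∈ M ^ n := hLk n
    have h2 : (F n).1 - (F k).1 ∈ M ^ n := hdiff k n (hge k)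
    have := Submodule.add_mem _ h1 h2
    simpa [sub_add_sub_cancel] using this
  refine ⟨L, ?_, ?_⟩
  · by_cases hJtop : J = ⊤
    · simp [hJtop]
    apply mem_of_forall_mem_sup_pow J hJtop
    intro n
    have h1 : (F n).1 ∈ J := (hInv n).1
    have h2 : L - (F n).1 ∈ M ^ n := hLk n
    have : (F n).1 + (L - (F n).1) ∈ J ⊔ M ^ n :=
      Submodule.add_mem _ (Ideal.mem_sup_left h1) (Ideal.mem_sup_right h2)
    simpa using this
  · intro i
    obtain ⟨j, rfl⟩ := he i
    have hinv := (hInv (j + 1)).2.2 j (Nat.lt_succ_self j)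
    have hclose : L - (F (j + 1)).1 ∈ M ^ (F (j + 1)).2 := hLk' (j + 1)
    intro hmem
    apply hinv
    have : (L - s j) - (L - (F (j + 1)).1) ∈ Q j ⊔ M ^ (F (j + 1)).2 :=
      Submodule.sub_mem _ (Ideal.mem_sup_left hmem) (Ideal.mem_sup_right hclose)
    simpa using this

end Aux

/-- A PB-subring of a complete local ring `(T, M)`: a subring `R` which is quasi-local with
maximal ideal `R ∩ M` (i.e. every element of `R` outside `M` is a unit of `R`), such that
`|R| ≤ sup{ℵ₀, |T/M|}` with equality only possible when `T/M` is countable, and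
`R ∩ Q = (0)` for every associated prime `Q` of `T`. -/
def IsPBSubring {T : Type u} [CommRing T] [IsLocalRing T] (R : Subring T) : Prop :=
  (∀ r : R, (r : T) ∉ IsLocalRing.maximalIdeal T → IsUnit r) ∧
  Cardinal.mk R ≤ max Cardinal.aleph0 (Cardinal.mk (T ⧸ IsLocalRing.maximalIdeal T)) ∧
  (Cardinal.mk R = max Cardinal.aleph0 (Cardinal.mk (T ⧸ IsLocalRing.maximalIdeal T)) →
    Countable (T ⧸ IsLocalRing.maximalIdeal T)) ∧
  (∀ Q ∈ associatedPrimes T T, ∀ r ∈ R, r ∈ Q → r = 0)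

/-- Let `(T, M)` be a complete local ring with `M ∉ Ass(T)` and `R` a
PB-subring of `T`. If an ideal `J` of `T` is contained in no single associated prime of
`T`, then there is `x ∈ J` whose image in `T/P` is transcendental over the canonical image
of `R` in `T/P`, for every `P ∈ Ass(T)`. -/
theorem stmt_10 {T : Type u} [CommRing T] [IsLocalRing T] [IsNoetherianRing T]
    [IsAdicComplete (IsLocalRing.maximalIdeal T) T]
    (hM : IsLocalRing.maximalIdeal T ∉ associatedPrimes T T)
    (R : Subring T) (hR : IsPBSubring R)
    (J : Ideal T) (hJ : ∀ P ∈ associatedPrimes T T, ¬ J ≤ P) :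
    ∃ x ∈ J, ∀ P ∈ associatedPrimes T T,
      Transcendental (R.map (Ideal.Quotient.mk P)) (Ideal.Quotient.mk P x) := by
  classical
  by_cases hass : associatedPrimes T T = ∅
  · exact ⟨0, J.zero_mem, fun P hP => absurd (hass ▸ hP) (Set.notMem_empty P)⟩
  have AssF : (associatedPrimes T T).Finite := assPrimes_finite
  haveI : Finite ↥(associatedPrimes T T) := AssF.to_subtype
  by_cases hcount : #R ≤ ℵ₀
  · -- countable case: Heitmann's coset avoidance
    have halgc : ∀ P : ↥(associatedPrimes T T),
        Countable {a : T ⧸ (P : Ideal T) |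
          IsAlgebraic (R.map (Ideal.Quotient.mk (P : Ideal T))) a} := by
      intro P
      haveI : (P : Ideal T).IsPrime := P.2.isPrime
      rw [← Cardinal.mk_le_aleph0_iff]
      refine le_trans (mk_setOf_isAlgebraic_le _) (max_le ?_ le_rfl)
      exact le_trans (mk_subring_map_le _ R) hcount
    haveI := halgc
    set ι := (P : ↥(associatedPrimes T T)) × {a : T ⧸ (P : Ideal T) |
        IsAlgebraic (R.map (Ideal.Quotient.mk (P : Ideal T))) a} with hι
    have rr : ∀ i : ι, ∃ w : T, Ideal.Quotient.mk (i.1 : Ideal T) w = (i.2 : T ⧸ (i.1 : Ideal T)) :=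
      fun i => Ideal.Quotient.mk_surjective _
    choose rfun hrfun using rr
    obtain ⟨x, hxJ, havoid⟩ := coset_avoidance (fun i : ι => (i.1 : Ideal T)) rfun
      (fun i => i.1.2.isPrime) (fun i h => hM (h ▸ i.1.2)) J (fun i => hJ _ i.1.2)
    refine ⟨x, hxJ, fun P hP halg => ?_⟩
    set i : ι := ⟨⟨P, hP⟩, ⟨Ideal.Quotient.mk P x, halg⟩⟩ with hi
    apply havoid i
    have : Ideal.Quotient.mk P (x - rfun i) = 0 := by
      rw [map_sub, hrfun i, sub_eq_zero]
    exact Ideal.Quotient.eq_zero_iff_mem.1 this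
  · -- uncountable residue field case: counting argument
    push_neg at hcount
    set M := IsLocalRing.maximalIdeal T with hMdef
    -- #R < #(T/M)
    have hRle : #R ≤ max ℵ₀ #(T ⧸ M) := hR.2.1
    have hTMbig : ℵ₀ < #(T ⧸ M) := by
      rcases le_or_gt (#(T ⧸ M)) ℵ₀ with h | h
      · exact absurd (le_trans hRle (max_le le_rfl h)) (not_le.2 hcount)
      · exact h
    have hRle' : #R ≤ #(T ⧸ M) := le_trans hRle (max_le hTMbig.le le_rfl)
    have hlt : #R < #(T ⧸ M) := by
      rcases lt_or_eq_of_le hRle' with h | h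
      · exact h
      · exfalso
        have : Countable (T ⧸ M) := hR.2.2.1 (by rw [h, max_eq_right hTMbig.le])
        exact absurd (Cardinal.mk_le_aleph0_iff.2 this) (not_le.2 hTMbig)
    -- pick x₀ ∈ J avoiding all associated primes
    have key := Ideal.subset_union_prime (R := T) (s := AssF.toFinset) (f := id)
      (⊥ : Ideal T) (⊥ : Ideal T)
      (fun P hPm _ _ => (AssF.mem_toFinset.1 hPm).isPrime) (I := J)
    have hnotsub : ¬ ((J : Set T) ⊆ ⋃ P ∈ (↑AssF.toFinset : Set (Ideal T)), ((id P : Ideal T) : Set T)) := by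
      intro hsub
      obtain ⟨P, hPm, hle⟩ := key.1 hsub
      exact hJ P (AssF.mem_toFinset.1 hPm) hle
    obtain ⟨x₀, hx₀J, hx₀out⟩ := Set.not_subset.1 hnotsub
    have hx₀P : ∀ P ∈ associatedPrimes T T, x₀ ∉ P := by
      intro P hP hmem
      apply hx₀out
      refine Set.mem_biUnion ?_ hmem
      exact Finset.mem_coe.2 (AssF.mem_toFinset.2 hP)
    -- coset representatives of T/M
    obtain ⟨u, hu⟩ := (Ideal.Quotient.mk_surjective (I := M)).hasRightInverse
    -- the bad set
    set bad : ↥(associatedPrimes T T) → Set (T ⧸ M) := fun P =>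
      {c : T ⧸ M | IsAlgebraic (R.map (Ideal.Quotient.mk (P : Ideal T)))
        (Ideal.Quotient.mk (P : Ideal T) (x₀ * u c))} with hbad
    have hbadcard : ∀ P, #(bad P) ≤ #R := by
      intro P
      haveI : (P : Ideal T).IsPrime := P.2.isPrime
      have hinj : Function.Injective (fun c : bad P =>
          (⟨Ideal.Quotient.mk (P : Ideal T) (x₀ * u c.1), c.2⟩ :
            {a : T ⧸ (P : Ideal T) |
              IsAlgebraic (R.map (Ideal.Quotient.mk (P : Ideal T))) a})) := by
        rintro ⟨c, hc⟩ ⟨c', hc'⟩ hEq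
        have h1 : Ideal.Quotient.mk (P : Ideal T) (x₀ * u c)
            = Ideal.Quotient.mk (P : Ideal T) (x₀ * u c') := by
          simpa using congrArg Subtype.val hEq
        have h2 : x₀ * u c - x₀ * u c' ∈ (P : Ideal T) := Ideal.Quotient.eq.1 h1
        have h3 : x₀ * (u c - u c') ∈ (P : Ideal T) := by
          rwa [mul_sub]
        have h4 : u c - u c' ∈ (P : Ideal T) :=
          (this.mem_or_mem h3).resolve_left (hx₀P _ P.2)
        have h5 : u c - u c' ∈ M :=
          le_maximalIdeal this.ne_top h4
        have h6 : c = c' := by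
          have := Ideal.Quotient.eq.2 h5
          rwa [hu c, hu c'] at this
        exact Subtype.ext h6
      calc #(bad P) ≤ #{a : T ⧸ (P : Ideal T) |
            IsAlgebraic (R.map (Ideal.Quotient.mk (P : Ideal T))) a} :=
          Cardinal.mk_le_of_injective hinj
        _ ≤ max (#(R.map (Ideal.Quotient.mk (P : Ideal T)))) ℵ₀ := mk_setOf_isAlgebraic_le _
        _ ≤ max (#R) ℵ₀ := max_le_max (mk_subring_map_le _ R) le_rfl
        _ = #R := max_eq_left hcount.le
    -- the union of bad sets is small
    haveI : Nonempty ↥(associatedPrimes T T) :=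
      (Set.nonempty_iff_ne_empty.2 hass).to_subtype
    have hbig : #(⋃ P, bad P) < #(T ⧸ M) := by
      calc #(⋃ P, bad P) ≤ #↥(associatedPrimes T T) * ⨆ P, #(bad P) :=
            Cardinal.mk_iUnion_le _
        _ ≤ ℵ₀ * #R := by
            apply mul_le_mul'
            · exact (lt_aleph0_of_finite _).le
            · exact ciSup_le' hbadcard
        _ = #R := by
            rw [Cardinal.mul_eq_max le_rfl hcount.le, max_eq_right hcount.le]
        _ < #(T ⧸ M) := hlt
    have hc : ∃ c : T ⧸ M, c ∉ ⋃ P, bad P := by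
      by_contra hcon
      push_neg at hcon
      have : (⋃ P, bad P) = Set.univ := Set.eq_univ_of_forall hcon
      rw [this, Cardinal.mk_univ] at hbig
      exact lt_irrefl _ hbig
    obtain ⟨c, hc⟩ := hc
    refine ⟨x₀ * u c, Ideal.mul_mem_right _ _ hx₀J, fun P hP halg => ?_⟩
    exact hc (Set.mem_iUnion.2 ⟨⟨P, hP⟩, halg⟩)
end

section
/- Let (T,M) be a complete local ring with M not an associated prime ideal of T. Let R be a PB-subring of T and let u ∈ T. Then there exists a PB-subring S of T such that R ⊆ S ⊆ T, there is some c ∈ S with u − c ∈ M², and |S| = sup{|R|, ℵ₀}. -/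
section AssFinite

variable {R : Type*} [CommRing R] {M : Type*} [AddCommGroup M] [Module R M]

lemma sandwich_ass [IsNoetherianRing R] (N : Submodule R M) {p : Ideal R} (hp : p ∈ associatedPrimes R M) :
    p ∈ associatedPrimes R N ∨ p ∈ associatedPrimes R (M ⧸ N) := by
  obtain ⟨hprime, x, hx⟩ := isAssociatedPrime_iff.mp hp
  rw [Submodule.bot_colon'] at hx
  by_cases h : ∀ r : R, r • x ∈ N → r • x = 0
  · right
    refine isAssociatedPrime_iff.mpr ⟨hprime, N.mkQ x, ?_⟩
    rw [Submodule.bot_colon']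
    rw [hx]; ext r
    rw [Submodule.mem_annihilator_span_singleton, Submodule.mem_annihilator_span_singleton,
      ← map_smul, Submodule.mkQ_apply, Submodule.Quotient.mk_eq_zero]
    exact ⟨fun h0 => h0 ▸ N.zero_mem, fun hm => h r hm⟩
  · push_neg at h
    obtain ⟨r, hrN, hrx⟩ := h
    left
    have hrp : r ∉ p := by
      rw [hx, Submodule.mem_annihilator_span_singleton]; exact hrx
    refine isAssociatedPrime_iff.mpr ⟨hprime, ⟨r • x, hrN⟩, ?_⟩
    rw [Submodule.bot_colon']
    ext s
    rw [Submodule.mem_annihilator_span_singleton]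
    have : (s • (⟨r • x, hrN⟩ : N) : N) = ⟨s • r • x, N.smul_mem s hrN⟩ := rfl
    rw [this]
    constructor
    · intro hs
      have : s • r • x = 0 := by
        rw [smul_comm]
        rw [hx, Submodule.mem_annihilator_span_singleton] at hs
        rw [hs, smul_zero]
      exact Subtype.ext this
    · intro hs
      have hs' : (s * r) • x = 0 := by
        rw [mul_smul]; exact congrArg Subtype.val hs
      have : s * r ∈ p := by rw [hx, Submodule.mem_annihilator_span_singleton]; exact hs'
      rcases hprime.mem_or_mem this with h1 | h2
      · exact h1
      · exact absurd h2 hrp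

lemma ass_span_singleton_subset [IsNoetherianRing R] {p : Ideal R} (hprime : p.IsPrime) (x : M)
    (hx : p = (Submodule.span R {x}).annihilator) :
    associatedPrimes R ↥(Submodule.span R {x}) ⊆ {p} := by
  intro q hq'
  obtain ⟨hq, y, hy⟩ := isAssociatedPrime_iff.mp hq'
  rw [Submodule.bot_colon'] at hy
  obtain ⟨r, hr⟩ := Submodule.mem_span_singleton.mp y.2
  have hyval : (y : M) = r • x := hr.symm
  by_cases hy0 : (y : M) = 0
  · exfalso
    apply hq.ne_top
    rw [hy, Ideal.eq_top_iff_one, Submodule.mem_annihilator_span_singleton]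
    have : y = 0 := Subtype.ext hy0
    rw [this, smul_zero]
  · have hrp : r ∉ p := by
      rw [hx, Submodule.mem_annihilator_span_singleton]
      intro h0; exact hy0 (hyval.trans h0)
    have key : ∀ s : R, s ∈ q ↔ s * r ∈ p := by
      intro s
      rw [hy, Submodule.mem_annihilator_span_singleton, hx,
        Submodule.mem_annihilator_span_singleton, mul_smul]
      constructor
      · intro h0
        have := congrArg Subtype.val h0
        simp only [Submodule.coe_smul, ZeroMemClass.coe_zero] at this
        rw [hyval] at this; exact this
      · intro h0
        apply Subtype.ext
        simp only [Submodule.coe_smul, ZeroMemClass.coe_zero]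
        rw [hyval]; exact h0
    have : q = p := by
      ext s
      rw [key s]
      exact ⟨fun h0 => (hprime.mem_or_mem h0).resolve_right hrp, fun h0 => Ideal.mul_mem_right r _ h0⟩
    simp [this]

theorem ass_finite [IsNoetherianRing R] [IsNoetherian R M] :
    (associatedPrimes R M).Finite := by
  have main : ∀ N : Submodule R M, (associatedPrimes R (M ⧸ N)).Finite := by
    intro N
    induction N using IsNoetherian.induction with
    | _ N IH =>
    by_cases hs : Subsingleton (M ⧸ N)
    · rw [associatedPrimes.eq_empty_of_subsingleton]; exact Set.finite_empty
    · have : Nontrivial (M ⧸ N) := not_subsingleton_iff_nontrivial.mp hs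
      obtain ⟨p, hp⟩ := associatedPrimes.nonempty R (M ⧸ N)
      obtain ⟨hprime, xb, hxb⟩ := isAssociatedPrime_iff.mp hp
      rw [Submodule.bot_colon'] at hxb
      have hxb0 : xb ≠ 0 := by
        intro h0
        apply hprime.ne_top
        rw [hxb, Ideal.eq_top_iff_one, Submodule.mem_annihilator_span_singleton, h0, smul_zero]
      set N' : Submodule R M := Submodule.comap N.mkQ (Submodule.span R {xb}) with hN'
      have hNN' : N < N' := by
        constructor
        · intro y hy
          have h0 : N.mkQ y = 0 := by
            rw [Submodule.mkQ_apply]; exact (Submodule.Quotient.mk_eq_zero N).mpr hy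
          rw [hN', Submodule.mem_comap, h0]
          exact Submodule.zero_mem _
        · intro hle
          obtain ⟨x, hx⟩ := N.mkQ_surjective xb
          have hxN' : x ∈ N' := by
            simp only [hN', Submodule.mem_comap, hx]
            exact Submodule.mem_span_singleton_self xb
          have := hle hxN'
          apply hxb0
          rw [← hx]
          exact (Submodule.Quotient.mk_eq_zero N).mpr this
      have hfin' := IH N' hNN'
      have hmap : Submodule.map N.mkQ N' = Submodule.span R {xb} :=
        Submodule.map_comap_eq_of_surjective N.mkQ_surjective _
      have hequiv : ((M ⧸ N) ⧸ Submodule.map N.mkQ N') ≃ₗ[R] M ⧸ N' :=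
        Submodule.quotientQuotientEquivQuotient N N' hNN'.le
      have hsub : associatedPrimes R (M ⧸ N) ⊆
          {p} ∪ associatedPrimes R (M ⧸ N') := by
        intro q hq
        rcases sandwich_ass (Submodule.span R {xb}) hq with h1 | h2
        · exact Or.inl (ass_span_singleton_subset hprime xb hxb h1)
        · right
          rw [← hmap] at h2
          rwa [LinearEquiv.AssociatedPrimes.eq hequiv] at h2
      exact Set.Finite.subset (Set.Finite.union (Set.finite_singleton p) hfin') hsub
  have := main ⊥
  have e : (M ⧸ (⊥ : Submodule R M)) ≃ₗ[R] M := Submodule.quotEquivOfEqBot ⊥ rfl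
  rwa [LinearEquiv.AssociatedPrimes.eq e] at this

end AssFinite

open IsLocalRing
section Complete
universe u
variable {T : Type u} [CommRing T] [IsLocalRing T] [IsNoetherianRing T]

omit [IsNoetherianRing T] in
lemma ideal_smul_top (n : ℕ) :
    (maximalIdeal T ^ n • ⊤ : Submodule T T) = maximalIdeal T ^ n := by
  rw [smul_eq_mul, Ideal.mul_top]

lemma mem_of_forall_mem_add_pow (J : Ideal T) (x : T)
    (h : ∀ n : ℕ, x ∈ J + maximalIdeal T ^ n) : x ∈ J := by
  have hbot : (⨅ i : ℕ, maximalIdeal T ^ i • ⊤ : Submodule T (T ⧸ J)) = ⊥ :=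
    Ideal.iInf_pow_smul_eq_bot_of_isLocalRing (maximalIdeal T)
      (Ideal.IsMaximal.ne_top (maximalIdeal.isMaximal T))
  have hx : (Ideal.Quotient.mk J) x ∈ (⨅ i : ℕ, maximalIdeal T ^ i • ⊤ : Submodule T (T ⧸ J)) := by
    rw [Submodule.mem_iInf]
    intro n
    obtain ⟨j, hj, m, hm, hjm⟩ := Submodule.mem_sup.mp (h n)
    have : (Ideal.Quotient.mk J) x = m • ((Ideal.Quotient.mk J) 1) := by
      rw [← hjm]
      have : m • ((Ideal.Quotient.mk J) 1) = (Ideal.Quotient.mk J) (m * 1) := rfl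
      rw [this, mul_one, map_add, Ideal.Quotient.eq_zero_iff_mem.mpr hj, zero_add]
    rw [this]
    exact Submodule.smul_mem_smul hm Submodule.mem_top
  rw [hbot] at hx
  exact (Submodule.Quotient.mk_eq_zero J).mp hx

variable [IsAdicComplete (maximalIdeal T) T]

lemma continuum_le_image (Q : Ideal T) (hQ : Q.IsPrime) {t : T}
    (ht2 : t ∈ maximalIdeal T ^ 2) (htQ : t ∉ Q) :
    (2 : Cardinal.{u}) ^ Cardinal.aleph0 ≤
      Cardinal.mk ↥(Ideal.map (Ideal.Quotient.mk Q) (maximalIdeal T ^ 2)) := by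
  set Mx := maximalIdeal T with hMx
  -- partial sums
  set g : (ℕ → Bool) → ℕ → T := fun ε n => if ε n then t ^ (n + 1) else 0 with hg
  set s : (ℕ → Bool) → ℕ → T := fun ε N => ∑ k ∈ Finset.range N, g ε k with hs
  have hgmem : ∀ ε k, g ε k ∈ Mx ^ 2 := by
    intro ε k
    by_cases h : ε k
    · simp only [hg, h, if_true]
      have hps : t ^ (k + 1) = t ^ k * t := pow_succ t k
      rw [hps]
      exact Ideal.mul_mem_left _ _ ht2
    · simp only [hg, h, if_false]
      exact Submodule.zero_mem _
  have hsmem : ∀ ε N, s ε N ∈ Mx ^ 2 := fun ε N => Submodule.sum_mem _ fun k _ => hgmem ε k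
  have hgpow : ∀ ε k (m : ℕ), m ≤ k + 1 → g ε k ∈ Mx ^ m := by
    intro ε k m hm
    by_cases h : ε k
    · simp only [hg, h, if_true]
      have h1 : t ^ (k+1) ∈ (Mx ^ 2) ^ (k+1) := Ideal.pow_mem_pow ht2 (k+1)
      have h2 : (Mx ^ 2) ^ (k+1) ≤ Mx ^ m := by
        rw [← pow_mul]
        exact Ideal.pow_le_pow_right (by omega)
      exact h2 h1
    · simp only [hg, h, if_false]; exact Submodule.zero_mem _
  have hcauchy : ∀ ε, ∀ {m n : ℕ}, m ≤ n →
      s ε m ≡ s ε n [SMOD (Mx ^ m • ⊤ : Submodule T T)] := by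
    intro ε m n hmn
    rw [SModEq.sub_mem, ideal_smul_top]
    have : s ε m - s ε n = -(s ε n - s ε m) := by ring
    rw [this]
    apply neg_mem
    have hsum : s ε n - s ε m = ∑ k ∈ Finset.Ico m n, g ε k := by
      rw [hs, Finset.sum_Ico_eq_sub _ hmn]
    rw [hsum]
    exact Submodule.sum_mem _ fun k hk => hgpow ε k m (by
      have := (Finset.mem_Ico.mp hk).1; omega)
  have hex : ∀ ε : ℕ → Bool, ∃ L : T, L ∈ Mx ^ 2 ∧ ∀ n, s ε n - L ∈ Mx ^ n := by
    intro ε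
    obtain ⟨L, hL⟩ := IsPrecomplete.prec (inferInstance : IsPrecomplete Mx T) (hcauchy ε)
    have hL' : ∀ n, s ε n - L ∈ Mx ^ n := by
      intro n
      have := hL n
      rwa [SModEq.sub_mem, ideal_smul_top] at this
    refine ⟨L, ?_, hL'⟩
    apply mem_of_forall_mem_add_pow (Mx ^ 2) L
    intro n
    have : L = s ε n + (L - s ε n) := by ring
    rw [this]
    apply Submodule.add_mem
    · exact Submodule.mem_sup_left (hsmem ε n)
    · apply Submodule.mem_sup_right
      have := hL' n
      have h2 : L - s ε n = -(s ε n - L) := by ring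
      rw [h2]; exact neg_mem this
  choose L hLmem hLapprox using hex
  -- distinctness
  have hdist : ∀ ε ε' : ℕ → Bool, ε ≠ ε' →
      (Ideal.Quotient.mk Q) (L ε) ≠ (Ideal.Quotient.mk Q) (L ε') := by
    intro ε ε' hne
    have hex0 : ∃ n, ε n ≠ ε' n := Function.ne_iff.mp hne
    set n₀ := Nat.find hex0 with hn₀
    have hn₀ne : ε n₀ ≠ ε' n₀ := Nat.find_spec hex0
    have hmin : ∀ k, k < n₀ → ε k = ε' k := fun k hk => of_not_not (Nat.find_min hex0 hk)
    set v : T := if ε n₀ then 1 else -1 with hv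
    set d : T := L ε - L ε' with hd
    have hterm : g ε n₀ - g ε' n₀ = v * t ^ (n₀ + 1) := by
      simp only [hg, hv]
      cases hε : ε n₀ <;> cases hε' : ε' n₀ <;> rw [hε, hε'] at hn₀ne <;>
        first
          | exact absurd rfl hn₀ne
          | simp <;> ring
    have hclaim : d - v * t ^ (n₀ + 1) ∈ Ideal.span {t ^ (n₀ + 2)} := by
      apply mem_of_forall_mem_add_pow
      intro N
      set N' := max N (n₀ + 1) with hN'
      have hsd : s ε N' - s ε' N' - v * t ^ (n₀ + 1) ∈ Ideal.span {t ^ (n₀ + 2)} := by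
        have hsplit : s ε N' - s ε' N' =
            ∑ k ∈ Finset.range N', (g ε k - g ε' k) := by
          rw [hs, ← Finset.sum_sub_distrib]
        have hn₀mem : n₀ ∈ Finset.range N' := Finset.mem_range.mpr (by omega)
        have herase : ∑ k ∈ Finset.range N', (g ε k - g ε' k) =
            (g ε n₀ - g ε' n₀) + ∑ k ∈ (Finset.range N').erase n₀, (g ε k - g ε' k) :=
          (Finset.add_sum_erase _ _ hn₀mem).symm
        rw [hsplit, herase, hterm, add_sub_cancel_left]
        apply Submodule.sum_mem
        intro k hk
        have hkne : k ≠ n₀ := Finset.ne_of_mem_erase hk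
        rcases lt_or_gt_of_ne hkne with hlt | hgt
        · rw [hg]; simp only [hmin k hlt, sub_self]
          exact Submodule.zero_mem _
        · have hg2 : ∀ (δ : ℕ → Bool), g δ k ∈ Ideal.span {t ^ (n₀ + 2)} := by
            intro δ
            simp only [hg]
            split_ifs
            · rw [Ideal.mem_span_singleton]
              exact pow_dvd_pow t (by omega)
            · exact Submodule.zero_mem _
          exact Submodule.sub_mem _ (hg2 ε) (hg2 ε')
      have htail : d - (s ε N' - s ε' N') ∈ Mx ^ N := by
        have h1 : d - (s ε N' - s ε' N') = -((s ε N' - L ε) - (s ε' N' - L ε')) := by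
          rw [hd]; ring
        rw [h1]
        apply neg_mem
        apply Submodule.sub_mem
        · exact Ideal.pow_le_pow_right (le_max_left _ _) (hLapprox ε N')
        · exact Ideal.pow_le_pow_right (le_max_left _ _) (hLapprox ε' N')
      have : d - v * t ^ (n₀ + 1) =
          (s ε N' - s ε' N' - v * t ^ (n₀ + 1)) + (d - (s ε N' - s ε' N')) := by ring
      rw [this]
      apply Submodule.add_mem
      · exact Submodule.mem_sup_left hsd
      · exact Submodule.mem_sup_right htail
    obtain ⟨w, hw⟩ := Ideal.mem_span_singleton.mp hclaim
    have hfact : d = t ^ (n₀ + 1) * (v + t * w) := by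
      have : d = v * t ^ (n₀ + 1) + t ^ (n₀ + 2) * w := by
        rw [← hw]; ring
      rw [this]; ring
    intro heq
    have hdQ : d ∈ Q := by
      rw [hd]
      exact (Ideal.Quotient.eq).mp heq
    rw [hfact] at hdQ
    rcases hQ.mem_or_mem hdQ with h1 | h2
    · exact htQ (hQ.mem_of_pow_mem _ h1)
    · have hQM : Q ≤ Mx := le_maximalIdeal hQ.ne_top
      have htM : t ∈ Mx := (Ideal.pow_le_self two_ne_zero) ht2
      have : v ∈ Mx := by
        have hvm : v = (v + t * w) - t * w := by ring
        rw [hvm]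
        exact Submodule.sub_mem _ (hQM h2) (Ideal.mul_mem_right _ _ htM)
      have hone : (1 : T) ∈ Mx := by
        rw [hv] at this
        by_cases h : ε n₀
        · rwa [if_pos h] at this
        · rw [if_neg h] at this
          rwa [neg_mem_iff] at this
      exact (Ideal.ne_top_iff_one _).mp (Ideal.IsMaximal.ne_top (maximalIdeal.isMaximal T)) hone
  -- conclude
  set F : ULift.{u} (ℕ → Bool) → ↥(Ideal.map (Ideal.Quotient.mk Q) (Mx ^ 2)) :=
    fun ε => ⟨(Ideal.Quotient.mk Q) (L ε.down), Ideal.mem_map_of_mem _ (hLmem ε.down)⟩ with hF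
  have hFinj : Function.Injective F := by
    intro a b hab
    have : (Ideal.Quotient.mk Q) (L a.down) = (Ideal.Quotient.mk Q) (L b.down) :=
      congrArg Subtype.val hab
    by_contra hne
    exact hdist a.down b.down (fun h => hne (by cases a; cases b; simp_all)) this
  have hle := Cardinal.mk_le_of_injective hFinj
  have hcard : Cardinal.mk (ULift.{u} (ℕ → Bool)) = (2 : Cardinal.{u}) ^ Cardinal.aleph0 := by
    rw [Cardinal.mk_uLift, ← Cardinal.power_def, Cardinal.mk_bool, Cardinal.mk_nat,
      Cardinal.lift_power, Cardinal.lift_two, Cardinal.lift_aleph0]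
  rwa [hcard] at hle

end Complete

/-- Let `(T, M)` be a complete local ring with `M ∉ Ass(T)`, `R` a
PB-subring of `T`, and `u ∈ T`. Then there is a PB-subring `S` of `T` with `R ⊆ S ⊆ T`,
some `c ∈ S` with `u - c ∈ M²`, and `|S| = sup{|R|, ℵ₀}`. -/
theorem stmt_12 {T : Type u} [CommRing T] [IsLocalRing T] [IsNoetherianRing T]
    [IsAdicComplete (IsLocalRing.maximalIdeal T) T]
    (hM : IsLocalRing.maximalIdeal T ∉ associatedPrimes T T)
    (R : Subring T) (hR : IsPBSubring R) (u : T) :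
    ∃ S : Subring T, IsPBSubring S ∧ R ≤ S ∧
      (∃ c ∈ S, u - c ∈ (IsLocalRing.maximalIdeal T) ^ 2) ∧
      Cardinal.mk S = max (Cardinal.mk R) Cardinal.aleph0 := by
  classical
  obtain ⟨hRunit, hRcard, hRcard2, hRass⟩ := hR
  set Mx : Ideal T := maximalIdeal T with hMxdef
  set lam : Cardinal.{u} := max (Cardinal.mk R) Cardinal.aleph0 with hlam
  have haleph0lam : Cardinal.aleph0 ≤ lam := le_max_right _ _
  have hMxne : Mx ≠ ⊤ := Ideal.IsMaximal.ne_top (maximalIdeal.isMaximal T)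
  have hone : (1 : T) ∉ Mx := fun h => (Ideal.ne_top_iff_one _).mp hMxne h
  set AssSet : Set (Ideal T) := associatedPrimes T T with hAssSet
  have hAssFin : AssSet.Finite := ass_finite
  have hAssprime : ∀ Q ∈ AssSet, Q.IsPrime := fun Q h => h.1
  have hQleM : ∀ Q ∈ AssSet, Q ≤ Mx := fun Q h => le_maximalIdeal h.1.ne_top
  -- a square in M² not in Q
  have hT2 : ∀ Q ∈ AssSet, ∃ t : T, t ∈ Mx ^ 2 ∧ t ∉ Q := by
    intro Q hQ
    have hMnle : ¬ Mx ≤ Q := by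
      intro hle
      exact hM (by rw [le_antisymm hle (hQleM Q hQ)]; exact hQ)
    obtain ⟨x, hxM, hxQ⟩ := SetLike.not_le_iff_exists.mp hMnle
    exact ⟨x ^ 2, Ideal.pow_mem_pow hxM 2, fun h => hxQ ((hAssprime Q hQ).mem_of_pow_mem _ h)⟩
  -- lam is smaller than the image of M² in T/Q
  have hlamlt : ∀ Q ∈ AssSet, lam < Cardinal.mk ↥(Ideal.map (Ideal.Quotient.mk Q) (Mx ^ 2)) := by
    intro Q hQass
    haveI hQp : Q.IsPrime := hAssprime Q hQass
    obtain ⟨t, ht2, htQ⟩ := hT2 Q hQass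
    have h2V : (2 : Cardinal.{u}) ^ Cardinal.aleph0 ≤
        Cardinal.mk ↥(Ideal.map (Ideal.Quotient.mk Q) (Mx ^ 2)) :=
      continuum_le_image Q hQp ht2 htQ
    have ht0 : (Ideal.Quotient.mk Q) t ≠ 0 := fun h => htQ (Ideal.Quotient.eq_zero_iff_mem.mp h)
    have hDV : Cardinal.mk (T ⧸ Q) ≤
        Cardinal.mk ↥(Ideal.map (Ideal.Quotient.mk Q) (Mx ^ 2)) := by
      have hinj : Function.Injective (fun x : T ⧸ Q =>
          (⟨(Ideal.Quotient.mk Q) t * x, Ideal.mul_mem_right x _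
            (Ideal.mem_map_of_mem _ ht2)⟩ : ↥(Ideal.map (Ideal.Quotient.mk Q) (Mx ^ 2)))) := by
        intro x y hxy
        exact mul_left_cancel₀ ht0 (congrArg Subtype.val hxy)
      exact Cardinal.mk_le_of_injective hinj
    have hkD : Cardinal.mk (T ⧸ Mx) ≤ Cardinal.mk (T ⧸ Q) := by
      have hsurj : Function.Surjective (Ideal.Quotient.factor (hQleM Q hQass)) := by
        intro y; obtain ⟨x, rfl⟩ := Ideal.Quotient.mk_surjective y
        exact ⟨Ideal.Quotient.mk Q x, rfl⟩
      exact Cardinal.mk_le_of_surjective hsurj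
    by_cases hcnt : Countable (T ⧸ Mx)
    · have hRle : Cardinal.mk R ≤ Cardinal.aleph0 :=
        le_trans hRcard (max_le le_rfl (Cardinal.mk_le_aleph0_iff.mpr hcnt))
      calc lam ≤ Cardinal.aleph0 := max_le hRle le_rfl
        _ < 2 ^ Cardinal.aleph0 := Cardinal.cantor _
        _ ≤ _ := h2V
    · have hk0 : Cardinal.aleph0 < Cardinal.mk (T ⧸ Mx) := by
        rw [← not_le, Cardinal.mk_le_aleph0_iff]; exact hcnt
      have hle : Cardinal.mk R ≤ Cardinal.mk (T ⧸ Mx) := by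
        have h' := hRcard; rwa [max_eq_right hk0.le] at h'
      have hRlt : Cardinal.mk R < Cardinal.mk (T ⧸ Mx) := by
        rcases hle.lt_or_eq with h | h
        · exact h
        · exact absurd (hRcard2 (by rw [max_eq_right hk0.le]; exact h)) hcnt
      exact (max_lt hRlt hk0).trans_le (hkD.trans hDV)
  -- maximal elements of AssSet
  set maxAss : Set (Ideal T) := {Q ∈ AssSet | ∀ P ∈ AssSet, Q ≤ P → Q = P} with hmaxAss
  have hmaxfin : maxAss.Finite := hAssFin.subset (by intro x hx; exact hx.1)
  have hup : ∀ Q ∈ AssSet, ∃ Q' ∈ maxAss, Q ≤ Q' := by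
    intro Q hQ
    have hsfin : ({P ∈ AssSet | Q ≤ P} : Set (Ideal T)).Finite :=
      hAssFin.subset (fun P hP => hP.1)
    obtain ⟨Q', hQQ', hmax⟩ := hsfin.exists_le_maximal (a := Q) ⟨hQ, le_rfl⟩
    exact ⟨Q', ⟨hmax.prop.1, fun P hP hle => hmax.eq_of_le ⟨hP, hQQ'.trans hle⟩ hle⟩, hQQ'⟩
  -- the residue map for each prime
  have hphiinj : ∀ Q ∈ AssSet, Function.Injective ((Ideal.Quotient.mk Q).comp R.subtype) := by
    intro Q hQ
    rw [injective_iff_map_eq_zero]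
    intro r hr
    have hrQ : (r : T) ∈ Q := by
      rwa [RingHom.comp_apply, Ideal.Quotient.eq_zero_iff_mem] at hr
    exact Subtype.ext (hRass Q hQ (r : T) r.2 hrQ)
  -- the algebraic (bad) sets are small
  have halg : ∀ Q ∈ AssSet, Cardinal.mk
      ↥{x : T ⧸ Q | ∃ f : Polynomial ↥R, f ≠ 0 ∧
        Polynomial.eval₂ ((Ideal.Quotient.mk Q).comp R.subtype) x f = 0} ≤ lam := by
    intro Q hQ
    haveI hQp : Q.IsPrime := hAssprime Q hQ
    have hφinj := hphiinj Q hQ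
    set B : Polynomial ↥R → Set (T ⧸ Q) := fun f =>
      {x | f ≠ 0 ∧ Polynomial.eval₂ ((Ideal.Quotient.mk Q).comp R.subtype) x f = 0} with hB
    have hsub : {x : T ⧸ Q | ∃ f : Polynomial ↥R, f ≠ 0 ∧
        Polynomial.eval₂ ((Ideal.Quotient.mk Q).comp R.subtype) x f = 0} = ⋃ f, B f := by
      ext x
      simp only [hB, Set.mem_setOf_eq, Set.mem_iUnion]
    rw [hsub]
    have hBfin : ∀ f, (B f).Finite := by
      intro f
      by_cases hf0 : f = 0
      · have : B f = ∅ := by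
          ext x; simp [hB, hf0]
        rw [this]; exact Set.finite_empty
      · have hmapne : f.map ((Ideal.Quotient.mk Q).comp R.subtype) ≠ 0 :=
          (Polynomial.map_ne_zero_iff hφinj).mpr hf0
        have hss : B f ⊆ {x | (f.map ((Ideal.Quotient.mk Q).comp R.subtype)).IsRoot x} := by
          intro x hx
          simp only [Set.mem_setOf_eq, Polynomial.IsRoot, Polynomial.eval_map]
          exact hx.2
        exact (Polynomial.finite_setOf_isRoot hmapne).subset hss
    calc Cardinal.mk ↥(⋃ f, B f) ≤ Cardinal.mk (Polynomial ↥R) * ⨆ f, Cardinal.mk ↥(B f) :=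
        Cardinal.mk_iUnion_le B
      _ ≤ lam * Cardinal.aleph0 := by
          apply mul_le_mul'
          · exact hlam ▸ Polynomial.cardinalMk_le_max
          · exact ciSup_le' fun f => Cardinal.mk_le_aleph0_iff.mpr (hBfin f).countable.to_subtype
      _ = lam := Cardinal.mul_aleph0_eq haleph0lam
  -- choice of the decomposition elements and the coefficients
  have hchoice : ∀ Q : Ideal T, ∃ qm : T × T, Q ∈ maxAss →
      (qm.1 ∉ Q ∧ (∀ Q' ∈ maxAss, Q' ≠ Q → qm.1 ∈ Q') ∧ qm.2 ∈ Mx ^ 2 ∧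
        ¬ (∃ f : Polynomial ↥R, f ≠ 0 ∧
          Polynomial.eval₂ ((Ideal.Quotient.mk Q).comp R.subtype)
            ((Ideal.Quotient.mk Q) (u + qm.2 * qm.1)) f = 0)) := by
    intro Q
    by_cases hQmax : Q ∈ maxAss
    swap
    · exact ⟨(0, 0), fun h => absurd h hQmax⟩
    have hQass : Q ∈ AssSet := hQmax.1
    haveI hQp : Q.IsPrime := hAssprime Q hQass
    have hqex : ∃ q : T, q ∉ Q ∧ ∀ Q' ∈ maxAss, Q' ≠ Q → q ∈ Q' := by
      have hnle : ¬ ((hmaxfin.toFinset.erase Q).inf id ≤ Q) := by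
        intro hle
        obtain ⟨Q', hQ'mem, hQ'le⟩ := (Ideal.IsPrime.inf_le' hQp).mp hle
        have hQ'max : Q' ∈ maxAss := hmaxfin.mem_toFinset.mp (Finset.mem_of_mem_erase hQ'mem)
        exact (Finset.ne_of_mem_erase hQ'mem) (hQ'max.2 Q hQass hQ'le)
      obtain ⟨q, hqinf, hqQ⟩ := SetLike.not_le_iff_exists.mp hnle
      refine ⟨q, hqQ, fun Q' hQ' hne => ?_⟩
      have hmem : Q' ∈ hmaxfin.toFinset.erase Q :=
        Finset.mem_erase.mpr ⟨hne, hmaxfin.mem_toFinset.mpr hQ'⟩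
      exact (Finset.inf_le hmem : _ ≤ id Q') hqinf
    obtain ⟨q, hqQ, hqmem⟩ := hqex
    have hq0 : (Ideal.Quotient.mk Q) q ≠ 0 := fun h => hqQ (Ideal.Quotient.eq_zero_iff_mem.mp h)
    have hmex : ∃ m ∈ Mx ^ 2, ¬ (∃ f : Polynomial ↥R, f ≠ 0 ∧
        Polynomial.eval₂ ((Ideal.Quotient.mk Q).comp R.subtype)
          ((Ideal.Quotient.mk Q) (u + m * q)) f = 0) := by
      by_contra hcon
      push_neg at hcon
      set Alg : Set (T ⧸ Q) := {x : T ⧸ Q | ∃ f : Polynomial ↥R, f ≠ 0 ∧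
        Polynomial.eval₂ ((Ideal.Quotient.mk Q).comp R.subtype) x f = 0} with hAlg
      have hmemAlg : ∀ v : ↥(Ideal.map (Ideal.Quotient.mk Q) (Mx ^ 2)),
          (Ideal.Quotient.mk Q) u + (v : T ⧸ Q) * (Ideal.Quotient.mk Q) q ∈ Alg := by
        intro v
        obtain ⟨m, hm, hmv⟩ :=
          (Ideal.mem_map_iff_of_surjective _ Ideal.Quotient.mk_surjective).mp v.2
        obtain ⟨f, hf0, hf⟩ := hcon m hm
        refine ⟨f, hf0, ?_⟩
        have hrw : (Ideal.Quotient.mk Q) u + (v : T ⧸ Q) * (Ideal.Quotient.mk Q) q =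
            (Ideal.Quotient.mk Q) (u + m * q) := by
          rw [← hmv, map_add, map_mul]
        rw [hrw]
        exact hf
      have hF : Function.Injective (fun v : ↥(Ideal.map (Ideal.Quotient.mk Q) (Mx ^ 2)) =>
          (⟨(Ideal.Quotient.mk Q) u + (v : T ⧸ Q) * (Ideal.Quotient.mk Q) q,
            hmemAlg v⟩ : ↥Alg)) := by
        intro v w hvw
        have h1 := congrArg Subtype.val hvw
        simp only at h1
        have h2 : (v : T ⧸ Q) * (Ideal.Quotient.mk Q) q =
            (w : T ⧸ Q) * (Ideal.Quotient.mk Q) q := by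
          exact add_left_cancel h1
        exact Subtype.ext (mul_right_cancel₀ hq0 h2)
      have hVle : Cardinal.mk ↥(Ideal.map (Ideal.Quotient.mk Q) (Mx ^ 2)) ≤ Cardinal.mk ↥Alg :=
        Cardinal.mk_le_of_injective hF
      exact absurd (hVle.trans (halg Q hQass)) (not_le.mpr (hlamlt Q hQass))
    obtain ⟨m, hm2, hnot⟩ := hmex
    exact ⟨(q, m), fun _ => ⟨hqQ, hqmem, hm2, hnot⟩⟩
  choose qm hqm using hchoice
  set c : T := u + ∑ Q ∈ hmaxfin.toFinset, (qm Q).2 * (qm Q).1 with hc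
  have hcu : c - u ∈ Mx ^ 2 := by
    rw [hc, add_sub_cancel_left]
    exact Submodule.sum_mem _ fun Q hQ => Ideal.mul_mem_right _ _ (hqm Q (hmaxfin.mem_toFinset.mp hQ)).2.2.1
  -- the key transcendence property
  have hKey : ∀ f : Polynomial ↥R, f ≠ 0 → ∀ Q ∈ AssSet,
      Polynomial.eval₂ R.subtype c f ∉ Q := by
    intro f hf0 Q hQass hmem
    obtain ⟨Q', hQ'max, hle⟩ := hup Q hQass
    apply (hqm Q' hQ'max).2.2.2
    refine ⟨f, hf0, ?_⟩
    have hQ'fin : Q' ∈ hmaxfin.toFinset := hmaxfin.mem_toFinset.mpr hQ'max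
    have hsplit : (∑ P ∈ hmaxfin.toFinset, (qm P).2 * (qm P).1) =
        (qm Q').2 * (qm Q').1 + ∑ P ∈ hmaxfin.toFinset.erase Q', (qm P).2 * (qm P).1 :=
      (Finset.add_sum_erase _ _ hQ'fin).symm
    have hdiff : c - (u + (qm Q').2 * (qm Q').1) ∈ Q' := by
      have heq : c - (u + (qm Q').2 * (qm Q').1) =
          ∑ P ∈ hmaxfin.toFinset.erase Q', (qm P).2 * (qm P).1 := by
        rw [hc, hsplit]; ring
      rw [heq]
      apply Submodule.sum_mem
      intro P hP
      have hPmax : P ∈ maxAss := hmaxfin.mem_toFinset.mp (Finset.mem_of_mem_erase hP)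
      have hPne : Q' ≠ P := (Finset.ne_of_mem_erase hP).symm
      exact Ideal.mul_mem_left _ _ ((hqm P hPmax).2.1 Q' hQ'max hPne)
    have hmkc : (Ideal.Quotient.mk Q') c =
        (Ideal.Quotient.mk Q') (u + (qm Q').2 * (qm Q').1) := Ideal.Quotient.eq.mpr hdiff
    have heval : Polynomial.eval₂ ((Ideal.Quotient.mk Q').comp R.subtype)
        ((Ideal.Quotient.mk Q') (u + (qm Q').2 * (qm Q').1)) f
        = (Ideal.Quotient.mk Q') (Polynomial.eval₂ R.subtype c f) := by
      rw [← hmkc]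
      exact (Polynomial.hom_eval₂ f R.subtype (Ideal.Quotient.mk Q') c).symm
    rw [heval]
    exact Ideal.Quotient.eq_zero_iff_mem.mpr (hle hmem)
  -- the subring A = R[c]
  set A : Subring T := (Algebra.adjoin ↥R {c}).toSubring with hA
  have hmemA : ∀ x : T, x ∈ A ↔ ∃ f : Polynomial ↥R, Polynomial.eval₂ R.subtype c f = x := by
    intro x
    constructor
    · intro hx
      have h1 : x ∈ Algebra.adjoin ↥R {c} := hx
      rw [Algebra.adjoin_singleton_eq_range_aeval] at h1
      obtain ⟨f, hf⟩ := h1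
      exact ⟨f, hf⟩
    · rintro ⟨f, hf⟩
      have h1 : x ∈ Algebra.adjoin ↥R {c} := by
        rw [Algebra.adjoin_singleton_eq_range_aeval]
        exact ⟨f, hf⟩
      exact h1
  have hRA : ∀ r : T, r ∈ R → r ∈ A := by
    intro r hr
    exact Subalgebra.algebraMap_mem (Algebra.adjoin ↥R {c}) (⟨r, hr⟩ : ↥R)
  have hcA : c ∈ A := Algebra.subset_adjoin rfl
  have hAQ : ∀ Q ∈ AssSet, ∀ a ∈ A, a ∈ Q → a = 0 := by
    intro Q hQ a haA haQ
    obtain ⟨f, hf⟩ := (hmemA a).mp haA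
    by_cases hf0 : f = 0
    · rw [← hf, hf0, Polynomial.eval₂_zero]
    · exact absurd haQ (hf ▸ hKey f hf0 Q hQ)
  -- the subring S = A localized at A ∩ M
  set Scar : Set T := {x | ∃ a ∈ A, ∃ b ∈ A, b ∉ Mx ∧ x * b = a} with hScar
  have hMxprime : Mx.IsPrime := (maximalIdeal.isMaximal T).isPrime
  set S : Subring T :=
    { carrier := Scar
      one_mem' := ⟨1, A.one_mem, 1, A.one_mem, hone, mul_one 1⟩
      zero_mem' := ⟨0, A.zero_mem, 1, A.one_mem, hone, mul_one 0⟩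
      mul_mem' := by
        rintro x y ⟨a₁, ha₁, b₁, hb₁, hb₁M, hx⟩ ⟨a₂, ha₂, b₂, hb₂, hb₂M, hy⟩
        refine ⟨a₁ * a₂, A.mul_mem ha₁ ha₂, b₁ * b₂, A.mul_mem hb₁ hb₂, ?_, by
          rw [← hx, ← hy]; ring⟩
        intro h
        rcases hMxprime.mem_or_mem h with h | h
        exacts [hb₁M h, hb₂M h]
      add_mem' := by
        rintro x y ⟨a₁, ha₁, b₁, hb₁, hb₁M, hx⟩ ⟨a₂, ha₂, b₂, hb₂, hb₂M, hy⟩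
        refine ⟨a₁ * b₂ + a₂ * b₁, A.add_mem (A.mul_mem ha₁ hb₂) (A.mul_mem ha₂ hb₁),
          b₁ * b₂, A.mul_mem hb₁ hb₂, ?_, by rw [← hx, ← hy]; ring⟩
        intro h
        rcases hMxprime.mem_or_mem h with h | h
        exacts [hb₁M h, hb₂M h]
      neg_mem' := by
        rintro x ⟨a₁, ha₁, b₁, hb₁, hb₁M, hx⟩
        exact ⟨-a₁, A.neg_mem ha₁, b₁, hb₁, hb₁M, by rw [← hx]; ring⟩ } with hS
  have hmemS : ∀ x : T, x ∈ S ↔ ∃ a ∈ A, ∃ b ∈ A, b ∉ Mx ∧ x * b = a := fun x => Iff.rfl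
  have hAS : ∀ a : T, a ∈ A → a ∈ S := fun a ha => ⟨a, ha, 1, A.one_mem, hone, mul_one a⟩
  have hRS : R ≤ S := fun r hr => hAS r (hRA r hr)
  have hcS : c ∈ S := hAS c hcA
  -- condition (iv) for S
  have hSass : ∀ Q ∈ associatedPrimes T T, ∀ r ∈ S, r ∈ Q → r = 0 := by
    intro Q hQ s hsS hsQ
    obtain ⟨a, haA, b, hbA, hbM, hsb⟩ := hsS
    have hbu : IsUnit b := not_not.mp hbM
    have haQ : a ∈ Q := hsb ▸ Ideal.mul_mem_right b Q hsQ
    have ha0 : a = 0 := hAQ Q hQ a haA haQ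
    rw [ha0, mul_comm] at hsb
    exact (IsUnit.mul_right_eq_zero hbu).mp hsb
  -- condition (i) for S
  have hSunit : ∀ s : S, (s : T) ∉ Mx → IsUnit s := by
    intro s hs
    obtain ⟨a, haA, b, hbA, hbM, hsb⟩ := s.2
    have haM : a ∉ Mx := by
      intro h
      rw [← hsb] at h
      rcases hMxprime.mem_or_mem h with h | h
      exacts [hs h, hbM h]
    have hsu : IsUnit (s : T) := not_not.mp hs
    set y : T := ↑hsu.unit⁻¹ with hy
    have h1 : (s : T) * y = 1 := by
      have := hsu.unit.mul_inv
      rwa [IsUnit.unit_spec] at this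
    have h2 : y * (s : T) = 1 := by rw [mul_comm]; exact h1
    have hyS : y ∈ S := by
      refine ⟨b, hbA, a, haA, haM, ?_⟩
      calc y * a = y * ((s : T) * b) := by rw [hsb]
        _ = (y * (s : T)) * b := by ring
        _ = b := by rw [h2, one_mul]
    exact ⟨⟨s, ⟨y, hyS⟩, Subtype.ext h1, Subtype.ext h2⟩, rfl⟩
  -- cardinality of S
  have hScard : Cardinal.mk S = lam := by
    haveI : Nontrivial ↥R :=
      ⟨⟨0, 1, fun h => zero_ne_one (congrArg Subtype.val h : (0 : T) = 1)⟩⟩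
    have hAcard : Cardinal.mk A ≤ lam := by
      have hsurj : Function.Surjective (fun f : Polynomial ↥R =>
          (⟨Polynomial.eval₂ R.subtype c f, (hmemA _).mpr ⟨f, rfl⟩⟩ : ↥A)) := by
        rintro ⟨a, haA⟩
        obtain ⟨f, hf⟩ := (hmemA a).mp haA
        exact ⟨f, Subtype.ext hf⟩
      exact le_trans (Cardinal.mk_le_of_surjective hsurj) (hlam ▸ Polynomial.cardinalMk_le_max)
    have hSle : Cardinal.mk S ≤ lam := by
      have hex : ∀ s : ↥S, ∃ p : ↥A × ↥A, ((p.2 : T) ∉ Mx) ∧ (s : T) * (p.2 : T) = (p.1 : T) := by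
        intro s
        obtain ⟨a, haA, b, hbA, hbM, hsb⟩ := s.2
        exact ⟨(⟨a, haA⟩, ⟨b, hbA⟩), hbM, hsb⟩
      choose F hF1 hF2 using hex
      have hFinj : Function.Injective F := by
        intro s₁ s₂ h12
        have hb : ((F s₁).2 : T) = ((F s₂).2 : T) := by rw [h12]
        have ha : ((F s₁).1 : T) = ((F s₂).1 : T) := by rw [h12]
        have hbu : IsUnit ((F s₁).2 : T) := not_not.mp (hF1 s₁)
        have h1 := hF2 s₁
        have h2 := hF2 s₂
        rw [← hb, ← ha] at h2
        exact Subtype.ext (hbu.mul_left_injective (h1.trans h2.symm))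
      calc Cardinal.mk S ≤ Cardinal.mk (↥A × ↥A) := Cardinal.mk_le_of_injective hFinj
        _ = Cardinal.mk A * Cardinal.mk A := by
            simp [Cardinal.mk_prod]
        _ ≤ lam * lam := mul_le_mul' hAcard hAcard
        _ = lam := Cardinal.mul_eq_self haleph0lam
    have hRle : Cardinal.mk R ≤ Cardinal.mk S := by
      have hinj : Function.Injective (fun r : ↥R => (⟨(r : T), hRS r.2⟩ : ↥S)) := by
        intro a b hab
        exact Subtype.ext (Subtype.mk_eq_mk.mp hab)
      exact Cardinal.mk_le_of_injective hinj
    have hInf : Infinite ↥S := by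
      obtain ⟨Q, hQass⟩ := associatedPrimes.nonempty T T
      refine Infinite.of_injective (fun n : ℕ => (⟨c ^ n, S.pow_mem hcS n⟩ : ↥S)) ?_
      intro n m hnm
      by_contra hne
      have hval : c ^ n = c ^ m := congrArg Subtype.val hnm
      set f : Polynomial ↥R := Polynomial.X ^ n - Polynomial.X ^ m with hf
      have hf0 : f ≠ 0 := by
        intro h0
        have hcoeff : f.coeff n = 1 := by
          simp [hf, Polynomial.coeff_X_pow, hne]
        rw [h0] at hcoeff
        simp at hcoeff
      have heval : Polynomial.eval₂ R.subtype c f = 0 := by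
        simp [hf, Polynomial.eval₂_sub, Polynomial.eval₂_pow, Polynomial.eval₂_X, hval]
      exact hKey f hf0 Q hQass (heval ▸ Q.zero_mem)
    rw [hlam]
    exact le_antisymm (hlam ▸ hSle) (max_le hRle (Cardinal.aleph0_le_mk_iff.mpr hInf))
  refine ⟨S, ⟨hSunit, ?_, ?_, hSass⟩, hRS, ⟨c, hcS, by
    have : u - c = -(c - u) := by ring
    rw [this]; exact neg_mem hcu⟩, hScard⟩
  · rw [hScard, hlam]
    exact max_le hRcard (le_max_left _ _)
  · intro hSeq
    by_cases hc : Countable (T ⧸ maximalIdeal T)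
    · exact hc
    · exfalso
      have hk0 : Cardinal.aleph0 < Cardinal.mk (T ⧸ maximalIdeal T) := by
        rw [← not_le, Cardinal.mk_le_aleph0_iff]; exact hc
      rw [hScard] at hSeq
      have hmaxeq : max Cardinal.aleph0 (Cardinal.mk (T ⧸ maximalIdeal T)) =
          Cardinal.mk (T ⧸ maximalIdeal T) := max_eq_right hk0.le
      rw [hmaxeq] at hSeq
      have hReq : Cardinal.mk R = Cardinal.mk (T ⧸ maximalIdeal T) := by
        rcases max_cases (Cardinal.mk R) Cardinal.aleph0 with ⟨h1, _⟩ | ⟨h1, _⟩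
        · rw [hlam, h1] at hSeq; exact hSeq
        · rw [hlam, h1] at hSeq; exact absurd hSeq hk0.ne
      exact hc (hRcard2 (by rw [hReq, hmaxeq]))
end

section
/- Let (T,M) be a complete local ring with M not an associated prime ideal of T, let t̄ ∈ T/M², and let R be a PB-subring of T. Then there exists a PB-subring S of T such that: (i) R ⊆ S ⊆ T with |S| = sup{|R|, ℵ₀}; (ii) t̄ lies in the image of the canonical map S → T/M²; and (iii) for every finitely generated ideal I of S, IT ∩ S = I. -/
set_option linter.unusedSectionVars false
set_option maxHeartbeats 1000000

open Cardinal

section AssFinite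
variable {R : Type*} [CommRing R] {M : Type*} [AddCommGroup M] [Module R M]

theorem smul_mk_eq {p : Ideal R} (r x : R) :
    r • (Ideal.Quotient.mk p) x = (Ideal.Quotient.mk p) (r * x) := rfl

theorem colon_bot_eq_ann (x : M) :
    (⊥ : Submodule R M).colon {x} = (Submodule.span R {x}).annihilator := by
  ext r
  rw [Submodule.mem_colon_singleton, Submodule.mem_bot, Submodule.mem_annihilator_span_singleton]

theorem isAssociatedPrime_quotient [IsNoetherianRing R] {p : Ideal R} (hp : p.IsPrime) {J : Ideal R}
    (hJ : IsAssociatedPrime J (R ⧸ p)) : J = p := by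
  obtain ⟨hJp, x, hx⟩ := isAssociatedPrime_iff.mp hJ
  rw [colon_bot_eq_ann] at hx
  obtain ⟨x, rfl⟩ := Ideal.Quotient.mk_surjective x
  by_cases hx0 : (Ideal.Quotient.mk p) x = 0
  · exfalso
    rw [hx0] at hx
    rw [Submodule.span_singleton_eq_bot.mpr rfl, Submodule.annihilator_bot] at hx
    exact hJp.ne_top hx
  · have hxp : x ∉ p := by rwa [Ideal.Quotient.eq_zero_iff_mem] at hx0
    ext r
    rw [hx, Submodule.mem_annihilator_span_singleton, smul_mk_eq,
      Ideal.Quotient.eq_zero_iff_mem]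
    exact ⟨fun h => (hp.mem_or_mem h).resolve_right hxp, fun h => Ideal.mul_mem_right _ _ h⟩

theorem isAssociatedPrime_sub_or_quot [IsNoetherianRing R] (W : Submodule R M) {p : Ideal R}
    (hp : IsAssociatedPrime p M) :
    IsAssociatedPrime p W ∨ IsAssociatedPrime p (M ⧸ W) := by
  obtain ⟨hpp, x, hx⟩ := isAssociatedPrime_iff.mp hp
  rw [colon_bot_eq_ann] at hx
  by_cases h : ∀ r : R, r • x ∈ W → r • x = 0
  · right
    refine isAssociatedPrime_iff.mpr ⟨hpp, W.mkQ x, ?_⟩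
    rw [colon_bot_eq_ann]
    ext r
    rw [hx, Submodule.mem_annihilator_span_singleton,
      Submodule.mem_annihilator_span_singleton, ← map_smul, Submodule.mkQ_apply,
      Submodule.Quotient.mk_eq_zero]
    exact ⟨fun hr => by rw [hr]; exact W.zero_mem, fun hr => h r hr⟩
  · left
    push_neg at h
    obtain ⟨r, hrW, hr0⟩ := h
    have hrp : r ∉ p := by
      rw [hx, Submodule.mem_annihilator_span_singleton]
      exact hr0
    refine isAssociatedPrime_iff.mpr ⟨hpp, ⟨r • x, hrW⟩, ?_⟩
    rw [colon_bot_eq_ann]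
    ext s
    have key : s • (⟨r • x, hrW⟩ : W) = 0 ↔ (s * r) • x = 0 := by
      rw [← smul_smul]
      constructor
      · intro hs; have := congrArg (Subtype.val) hs; simpa using this
      · intro hs; ext; simpa using hs
    rw [Submodule.mem_annihilator_span_singleton, key]
    have hmem : ∀ u : R, (u • x = 0) ↔ u ∈ p := by
      intro u; rw [hx, Submodule.mem_annihilator_span_singleton]
    rw [hmem]
    exact ⟨fun h1 => Ideal.mul_mem_right _ _ h1,
      fun h1 => (hpp.mem_or_mem h1).resolve_right hrp⟩

theorem associatedPrimes_finite (R M : Type*) [CommRing R] [AddCommGroup M] [Module R M]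
    [IsNoetherianRing R] [IsNoetherian R M] : (associatedPrimes R M).Finite := by
  by_contra hinf
  have hS : {N : Submodule R M | ¬ (associatedPrimes R (M ⧸ N)).Finite}.Nonempty := by
    refine ⟨⊥, ?_⟩
    intro h
    have heq : associatedPrimes R (M ⧸ (⊥ : Submodule R M)) = associatedPrimes R M :=
      LinearEquiv.AssociatedPrimes.eq (Submodule.quotEquivOfEqBot (⊥ : Submodule R M) rfl)
    rw [heq] at h
    exact hinf h
  obtain ⟨N, hN, hNmax⟩ := (set_has_maximal_iff_noetherian.mpr ‹IsNoetherian R M› _ hS)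
  have hnt : Nontrivial (M ⧸ N) := by
    rcases subsingleton_or_nontrivial (M ⧸ N) with h | h
    · refine absurd ?_ hN
      have : associatedPrimes R (M ⧸ N) = ∅ := associatedPrimes.eq_empty_of_subsingleton
      rw [this]
      exact Set.finite_empty
    · exact h
  obtain ⟨p, hp⟩ := associatedPrimes.nonempty R (M ⧸ N)
  obtain ⟨hpp, x, hx⟩ := isAssociatedPrime_iff.mp hp
  rw [colon_bot_eq_ann] at hx
  have hx0 : x ≠ 0 := by
    rintro rfl
    rw [Submodule.span_singleton_eq_bot.mpr rfl, Submodule.annihilator_bot] at hx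
    exact hpp.ne_top hx
  set W : Submodule R (M ⧸ N) := Submodule.span R {x} with hW
  set N' : Submodule R M := W.comap N.mkQ with hN'
  have hNN' : N ≤ N' := by
    intro m hm
    simp only [hN', Submodule.mem_comap, Submodule.mkQ_apply]
    rw [(Submodule.Quotient.mk_eq_zero N).mpr hm]
    exact W.zero_mem
  have hlt : N < N' := by
    refine lt_of_le_of_ne hNN' ?_
    obtain ⟨y, hy⟩ := N.mkQ_surjective x
    intro he
    apply hx0
    have hyN' : y ∈ N' := by
      simp only [hN', Submodule.mem_comap, Submodule.mkQ_apply, hy]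
      exact Submodule.mem_span_singleton_self x
    rw [← he] at hyN'
    rw [← hy]
    exact (Submodule.Quotient.mk_eq_zero N).mpr hyN'
  have hfin' : (associatedPrimes R (M ⧸ N')).Finite := by
    by_contra h
    exact hNmax N' h hlt
  apply hN
  have hsub : associatedPrimes R (M ⧸ N) ⊆ insert p (associatedPrimes R (M ⧸ N')) := by
    intro J hJ
    rcases isAssociatedPrime_sub_or_quot W hJ with h1 | h2
    · left
      -- W ≅ R ⧸ p
      have hker : LinearMap.ker (LinearMap.toSpanSingleton R (M ⧸ N) x) = p := by
        ext r
        rw [LinearMap.mem_ker, LinearMap.toSpanSingleton_apply, hx,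
          Submodule.mem_annihilator_span_singleton]
      have hrange : LinearMap.range (LinearMap.toSpanSingleton R (M ⧸ N) x) = W := by
        rw [hW, LinearMap.span_singleton_eq_range]
      have e : (R ⧸ p) ≃ₗ[R] W := by
        rw [← hker, ← hrange]
        exact (LinearMap.toSpanSingleton R (M ⧸ N) x).quotKerEquivRange
      have : IsAssociatedPrime J (R ⧸ p) := h1.map_of_injective e.symm.toLinearMap e.symm.injective
      exact isAssociatedPrime_quotient hpp this
    · right
      have hmapcomap : Submodule.map N.mkQ N' = W := by
        rw [hN', Submodule.map_comap_eq, Submodule.range_mkQ, top_inf_eq]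
      have e : ((M ⧸ N) ⧸ W) ≃ₗ[R] (M ⧸ N') := by
        rw [← hmapcomap]
        exact Submodule.quotientQuotientEquivQuotient N N' hNN'
      exact h2.map_of_injective e.toLinearMap e.injective
  exact (Set.Finite.insert p hfin').subset hsub
end AssFinite

open Cardinal IsLocalRing

universe u
variable {T : Type u} [CommRing T] [IsLocalRing T] [IsNoetherianRing T]

theorem assq_le_max {Q : Ideal T} (hQ : Q ∈ associatedPrimes T T) :
    Q ≤ maximalIdeal T :=
  le_maximalIdeal hQ.isPrime.ne_top

theorem regular_of_notmem_ass {a : T} (h : ∀ Q ∈ associatedPrimes T T, a ∉ Q) :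
    a ∈ nonZeroDivisors T := by
  rw [mem_nonZeroDivisors_iff_right]
  intro x hx
  by_contra hx0
  have hmem : a ∈ {r : T | ∃ y : T, y ≠ 0 ∧ r • y = 0} :=
    ⟨x, hx0, by rw [smul_eq_mul, mul_comm]; exact hx⟩
  rw [← biUnion_associatedPrimes_eq_zero_divisors T T] at hmem
  obtain ⟨Q, hQ, haQ⟩ := Set.mem_iUnion₂.mp hmem
  exact h Q hQ haQ

section Series
variable [IsAdicComplete (maximalIdeal T) T]

/-- T/Q is uncountable for any associated prime Q (using `M ∉ Ass T`). -/
theorem aleph0_lt_quot_ass (hM : maximalIdeal T ∉ associatedPrimes T T)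
    {Q : Ideal T} (hQ : Q ∈ associatedPrimes T T) : ℵ₀ < #(T ⧸ Q) := by
  have hprime : Q.IsPrime := hQ.isPrime
  have hlt : Q < maximalIdeal T := lt_of_le_of_ne (assq_le_max hQ) (fun h => hM (h ▸ hQ))
  obtain ⟨q, hqM, hqQ⟩ := SetLike.exists_of_lt hlt
  set MI := maximalIdeal T with hMI
  have hST : ∀ n : ℕ, (MI ^ n • ⊤ : Submodule T T) = (MI ^ n : Ideal T) := fun n => by
    rw [smul_eq_mul, Ideal.mul_top]
  set F : (ℕ → Bool) → ℕ → T := fun ε n => ∑ i ∈ Finset.range n, (if ε i then q^(i+1) else 0)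
    with hF
  have hterm : ∀ (ε : ℕ → Bool) (i : ℕ), (if ε i then q^(i+1) else 0) ∈ MI^(i+1) := by
    intro ε i
    split
    · exact Ideal.pow_mem_pow hqM (i+1)
    · exact Submodule.zero_mem _
  have htermM : ∀ (ε : ℕ → Bool) (i : ℕ), (if ε i then q^(i+1) else 0) ∈ MI := by
    intro ε i
    refine SetLike.le_def.mp ?_ (hterm ε i)
    calc MI^(i+1) ≤ MI^1 := Ideal.pow_le_pow_right (Nat.le_add_left 1 i)
    _ = MI := pow_one MI
  have hcauchy : ∀ (ε : ℕ → Bool) {m n : ℕ}, m ≤ n → F ε n - F ε m ∈ MI ^ m := by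
    intro ε m n hmn
    rw [hF]
    simp only
    rw [← Finset.sum_Ico_eq_sub _ hmn]
    refine Submodule.sum_mem _ (fun i hi => ?_)
    refine SetLike.le_def.mp (Ideal.pow_le_pow_right ?_) (hterm ε i)
    exact Nat.le_succ_of_le (Finset.mem_Ico.mp hi).1
  have hprec : ∀ ε : ℕ → Bool, ∃ L : T, ∀ n, F ε n - L ∈ MI ^ n := by
    intro ε
    obtain ⟨L, hL⟩ := IsPrecomplete.prec (IsAdicComplete.toIsPrecomplete (I := MI) (M := T))
      (f := F ε) (by
        intro m n hmn
        rw [SModEq.sub_mem, hST]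
        have := Submodule.neg_mem _ (hcauchy ε hmn)
        simpa using this)
    refine ⟨L, fun n => ?_⟩
    have := hL n
    rw [SModEq.sub_mem, hST] at this
    exact this
  choose Y hY using hprec
  -- injectivity
  have hinj : Function.Injective (fun ε : ULift.{u} (ℕ → Bool) =>
      Ideal.Quotient.mk Q (Y ε.down)) := by
    rintro ⟨ε⟩ ⟨δ⟩ hEq
    simp only at hEq
    rw [Ideal.Quotient.mk_eq_mk_iff_sub_mem] at hEq
    by_contra hne
    have hne' : ε ≠ δ := fun h => hne (congrArg ULift.up h)
    have hex : ∃ k, ε k ≠ δ k := Function.ne_iff.mp hne'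
    classical
    set k := Nat.find hex with hk
    have hkdiff : ε k ≠ δ k := Nat.find_spec hex
    have hksmall : ∀ i < k, ε i = δ i := fun i hi => by
      by_contra h; exact Nat.find_min hex hi h
    -- tail sequences
    set ε' : ℕ → Bool := fun j => ε (j + (k+1)) with hε'
    set δ' : ℕ → Bool := fun j => δ (j + (k+1)) with hδ'
    set w : T := Y ε' - Y δ' with hw
    set e : T := (if ε k then q^(k+1) else 0) - (if δ k then q^(k+1) else 0) with he
    -- key identity on partial sums
    have hkey : ∀ n : ℕ, F ε (n + (k+1)) - F δ (n + (k+1))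
        = e + q^(k+1) * (F ε' n - F δ' n) := by
      intro n
      rw [hF]
      simp only
      have expand : ∀ γ : ℕ → Bool, ∑ i ∈ Finset.range (n + (k+1)), (if γ i then q^(i+1) else 0)
          = (∑ i ∈ Finset.range k, (if γ i then q^(i+1) else 0))
            + (if γ k then q^(k+1) else 0)
            + q^(k+1) * ∑ j ∈ Finset.range n, (if γ (j + (k+1)) then q^(j+1) else 0) := by
        intro γ
        rw [add_comm n (k+1), Finset.sum_range_add, Finset.sum_range_succ]
        congr 1
        rw [Finset.mul_sum]
        refine Finset.sum_congr rfl (fun j _ => ?_)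
        have : γ (k + 1 + j) = γ (j + (k+1)) := by rw [Nat.add_comm (k+1) j]
        rw [this]
        split
        · ring
        · ring
      rw [expand ε, expand δ]
      have hsame : ∑ i ∈ Finset.range k, (if ε i then q^(i+1) else 0)
          = ∑ i ∈ Finset.range k, (if δ i then q^(i+1) else 0) :=
        Finset.sum_congr rfl (fun i hi => by rw [hksmall i (Finset.mem_range.mp hi)])
      rw [hsame]
      ring
    -- limit identity
    have hzero : (Y ε - Y δ) - (e + q^(k+1) * w) = 0 := by
      refine IsHausdorff.haus (IsAdicComplete.toIsHausdorff (I := MI) (M := T)) _ (fun n => ?_)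
      rw [SModEq.zero, hST]
      have h1 : Y ε - Y δ - (F ε (n + (k+1)) - F δ (n + (k+1))) ∈ MI ^ n := by
        have a1 := hY ε (n + (k+1))
        have a2 := hY δ (n + (k+1))
        have : (F ε (n+(k+1)) - Y ε) - (F δ (n+(k+1)) - Y δ) ∈ MI ^ (n+(k+1)) :=
          Submodule.sub_mem _ a1 a2
        have h' : Y ε - Y δ - (F ε (n + (k+1)) - F δ (n + (k+1)))
            = -((F ε (n+(k+1)) - Y ε) - (F δ (n+(k+1)) - Y δ)) := by ring
        rw [h']
        refine Submodule.neg_mem _ (SetLike.le_def.mp (Ideal.pow_le_pow_right ?_) this)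
        exact Nat.le_add_right n (k+1)
      have h2 : q^(k+1) * ((F ε' n - F δ' n) - w) ∈ MI ^ n := by
        have b1 := hY ε' n
        have b2 := hY δ' n
        have : (F ε' n - Y ε') - (F δ' n - Y δ') ∈ MI ^ n := Submodule.sub_mem _ b1 b2
        have h' : (F ε' n - F δ' n) - w = (F ε' n - Y ε') - (F δ' n - Y δ') := by
          rw [hw]; ring
        rw [h']
        exact Ideal.mul_mem_left _ _ this
      have hsplit : Y ε - Y δ - (e + q^(k+1) * w)
          = (Y ε - Y δ - (F ε (n + (k+1)) - F δ (n + (k+1))))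
            + ((F ε (n + (k+1)) - F δ (n + (k+1))) - (e + q^(k+1) * (F ε' n - F δ' n)))
            + q^(k+1) * ((F ε' n - F δ' n) - w) := by ring
      have hmid : (F ε (n + (k+1)) - F δ (n + (k+1))) - (e + q^(k+1) * (F ε' n - F δ' n))
          ∈ MI ^ n := by rw [hkey n]; simp
      rw [hsplit]
      exact Submodule.add_mem _ (Submodule.add_mem _ h1 hmid) h2
    have hzw : Y ε - Y δ = e + q^(k+1) * w := sub_eq_zero.mp hzero
    -- w ∈ MI
    have hwM : w ∈ MI := by
      have b1 := hY ε' 1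
      have b2 := hY δ' 1
      have hsub : (F ε' 1 - Y ε') - (F δ' 1 - Y δ') ∈ MI ^ 1 := Submodule.sub_mem _ b1 b2
      rw [pow_one] at hsub
      have hF1 : ∀ γ : ℕ → Bool, F γ 1 ∈ MI := by
        intro γ
        rw [hF]
        simpa using htermM γ 0
      have : w = F ε' 1 - F δ' 1 - ((F ε' 1 - Y ε') - (F δ' 1 - Y δ')) := by rw [hw]; ring
      rw [this]
      exact Submodule.sub_mem _ (Submodule.sub_mem _ (hF1 ε') (hF1 δ')) hsub
    -- contradiction
    rw [hzw] at hEq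
    have hqk : q^(k+1) ∉ Q := fun h => hqQ (hprime.mem_of_pow_mem _ h)
    have hone : (1 : T) ∈ MI := by
      cases h1 : ε k with
      | false =>
        have h2 : δ k = true := by
          cases h3 : δ k with
          | false => exact absurd (h1.trans h3.symm) hkdiff
          | true => rfl
        have hee : e = -(q^(k+1)) := by rw [he, h1, h2]; simp
        rw [hee] at hEq
        have hq2 : q^(k+1) * (w - 1) ∈ Q := by
          have hr : -(q^(k+1)) + q^(k+1) * w = q^(k+1) * (w - 1) := by ring
          rwa [hr] at hEq
        have hw1 : w - 1 ∈ Q := (hprime.mem_or_mem hq2).resolve_left hqk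
        have hfin : w - (w - 1) ∈ MI := Submodule.sub_mem _ hwM (SetLike.le_def.mp hlt.le hw1)
        simpa using hfin
      | true =>
        have h2 : δ k = false := by
          cases h3 : δ k with
          | true => exact absurd (h1.trans h3.symm) hkdiff
          | false => rfl
        have hee : e = q^(k+1) := by rw [he, h1, h2]; simp
        rw [hee] at hEq
        have hq2 : q^(k+1) * (w + 1) ∈ Q := by
          have hr : q^(k+1) + q^(k+1) * w = q^(k+1) * (w + 1) := by ring
          rwa [hr] at hEq
        have hw1 : w + 1 ∈ Q := (hprime.mem_or_mem hq2).resolve_left hqk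
        have hfin : (w + 1) - w ∈ MI := Submodule.sub_mem _ (SetLike.le_def.mp hlt.le hw1) hwM
        simpa using hfin
    exact (Ideal.ne_top_iff_one MI).mp (Ideal.IsPrime.ne_top inferInstance) hone
  have hcard := Cardinal.mk_le_of_injective hinj
  have hbig : ℵ₀ < #(ULift.{u} (ℕ → Bool)) := by
    rw [Cardinal.mk_uLift]
    have h1 : #(ℕ → Bool) = (2 : Cardinal) ^ (ℵ₀ : Cardinal) := by
      rw [show (2:Cardinal) = #Bool from Cardinal.mk_bool.symm,
        show (ℵ₀:Cardinal.{0}) = #ℕ from Cardinal.mk_nat.symm, Cardinal.power_def]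
    have h2 : (ℵ₀ : Cardinal.{0}) < #(ℕ → Bool) := by
      rw [h1]
      exact Cardinal.cantor ℵ₀
    calc (ℵ₀ : Cardinal.{u}) = Cardinal.lift.{u} (ℵ₀ : Cardinal.{0}) := by simp
    _ < Cardinal.lift.{u} #(ℕ → Bool) := Cardinal.lift_lt.mpr h2
  exact lt_of_lt_of_le hbig hcard
end Series

open Polynomial

/-- Adjoin one element to a subring. -/
noncomputable def adjoinEl (B : Subring T) (x : T) : Subring T :=
  (Algebra.adjoin (↥B) ({x} : Set T)).toSubring

theorem le_adjoinEl (B : Subring T) (x : T) : B ≤ adjoinEl B x := by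
  intro b hb
  have h : algebraMap (↥B) T ⟨b, hb⟩ ∈ Algebra.adjoin (↥B) ({x} : Set T) :=
    Subalgebra.algebraMap_mem _ _
  exact h

theorem mem_adjoinEl_self (B : Subring T) (x : T) : x ∈ adjoinEl B x := by
  have h : x ∈ Algebra.adjoin (↥B) ({x} : Set T) := Algebra.subset_adjoin rfl
  exact h

theorem mem_adjoinEl_iff {B : Subring T} {x u : T} :
    u ∈ adjoinEl B x ↔ ∃ f : Polynomial ↥B, Polynomial.aeval x f = u := by
  constructor
  · intro hu
    have h : u ∈ Algebra.adjoin (↥B) ({x} : Set T) := hu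
    rw [Algebra.adjoin_singleton_eq_range_aeval] at h
    obtain ⟨f, hf⟩ := h
    exact ⟨f, hf⟩
  · rintro ⟨f, rfl⟩
    have h : Polynomial.aeval x f ∈ Algebra.adjoin (↥B) ({x} : Set T) := by
      rw [Algebra.adjoin_singleton_eq_range_aeval]
      exact ⟨f, rfl⟩
    exact h

theorem mk_adjoinEl_le (B : Subring T) (x : T) : #(adjoinEl B x) ≤ max #B ℵ₀ := by
  have hsurj : Function.Surjective
      (fun f : Polynomial ↥B => (⟨Polynomial.aeval x f, mem_adjoinEl_iff.mpr ⟨f, rfl⟩⟩ :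
        ↥(adjoinEl B x))) := by
    rintro ⟨u, hu⟩
    obtain ⟨f, hf⟩ := mem_adjoinEl_iff.mp hu
    exact ⟨f, by simp [hf]⟩
  exact le_trans (Cardinal.mk_le_of_surjective hsurj) Polynomial.cardinalMk_le_max

/-- The avoidance property: `B ∩ Q = 0` for all associated primes `Q`. -/
def Avoids (B : Subring T) : Prop := ∀ Q ∈ associatedPrimes T T, ∀ x ∈ B, x ∈ Q → x = 0

theorem avoids_regular {B : Subring T} (hB : Avoids B) {a : T} (ha : a ∈ B) (ha0 : a ≠ 0) :
    a ∈ nonZeroDivisors T :=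
  regular_of_notmem_ass (fun Q hQ haQ => ha0 (hB Q hQ a ha haQ))

theorem subring_smul_def {B : Subring T} (b : ↥B) (z : T) : b • z = (b : T) * z := rfl

theorem avoids_adjoinEl_quotient {B : Subring T} (hB : Avoids B) {a c t : T}
    (ha : a ∈ B) (hc : c ∈ B) (ha0 : a ≠ 0) (ht : a * t = c) :
    Avoids (adjoinEl B t) := by
  intro Q hQ u hu huQ
  obtain ⟨f, rfl⟩ := mem_adjoinEl_iff.mp hu
  by_cases hf : f = 0
  · rw [hf]; simp
  set d := f.natDegree with hd
  have key : a^d * Polynomial.aeval t f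
      = ∑ i ∈ Finset.range (d+1), (f.coeff i : T) * (a^(d-i) * c^i) := by
    rw [Polynomial.aeval_eq_sum_range, Finset.mul_sum]
    refine Finset.sum_congr rfl (fun i hi => ?_)
    have hi' : i ≤ d := Nat.lt_succ_iff.mp (Finset.mem_range.mp hi)
    rw [subring_smul_def]
    have hpow : a^d * t^i = a^(d-i) * c^i := by
      have h1 : a^d = a^(d-i) * a^i := by rw [← pow_add, Nat.sub_add_cancel hi']
      rw [h1, mul_assoc, ← mul_pow, ht]
    calc a^d * ((f.coeff i : T) * t^i) = (f.coeff i : T) * (a^d * t^i) := by ring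
    _ = (f.coeff i : T) * (a^(d-i) * c^i) := by rw [hpow]
  set y : T := ∑ i ∈ Finset.range (d+1), (f.coeff i : T) * (a^(d-i) * c^i) with hy
  have hyB : y ∈ B := by
    refine Subring.sum_mem _ (fun i _ => ?_)
    exact Subring.mul_mem _ (SetLike.coe_mem _)
      (Subring.mul_mem _ (Subring.pow_mem _ ha _) (Subring.pow_mem _ hc _))
  have hyQ : y ∈ Q := by
    rw [← key]
    exact Ideal.mul_mem_left _ _ huQ
  have hy0 : y = 0 := hB Q hQ y hyB hyQ
  have hzero : a^d * Polynomial.aeval t f = 0 := by rw [key, hy0]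
  have hreg : a^d ∈ nonZeroDivisors T := pow_mem (avoids_regular hB ha ha0) d
  have := (mem_nonZeroDivisors_iff_right.mp hreg) (Polynomial.aeval t f) (by
    rw [mul_comm]; exact hzero)
  exact this

theorem algebraMap_subring_eq (B : Subring T) : (algebraMap (↥B) T) = B.subtype := rfl

theorem mk_aeval_eq {B : Subring T} (Q : Ideal T) (f : Polynomial ↥B) (s : T) :
    Ideal.Quotient.mk Q (Polynomial.aeval s f)
      = (f.map ((Ideal.Quotient.mk Q).comp B.subtype)).eval (Ideal.Quotient.mk Q s) := by
  rw [Polynomial.aeval_def, algebraMap_subring_eq, Polynomial.hom_eval₂,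
    Polynomial.eval₂_eq_eval_map]

theorem aeval_sub_mem {B : Subring T} {Q : Ideal T} (f : Polynomial ↥B) {s s' : T}
    (h : s - s' ∈ Q) : Polynomial.aeval s f - Polynomial.aeval s' f ∈ Q := by
  rw [← Ideal.Quotient.mk_eq_mk_iff_sub_mem]
  rw [mk_aeval_eq, mk_aeval_eq]
  congr 1
  rw [Ideal.Quotient.mk_eq_mk_iff_sub_mem]
  exact h

/-- Single-prime transcendence avoidance. -/
theorem exists_trans_single {c : Cardinal.{u}} (hc : ℵ₀ ≤ c) {Q : Ideal T}
    (hQ : Q.IsPrime) (hbig : c < #(T ⧸ Q)) (B : Subring T) (hBc : #B ≤ c)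
    (hBQ : ∀ x ∈ B, x ∈ Q → x = 0) (t₀ b : T) (hb : b ∉ Q) :
    ∃ u : T, ∀ f : Polynomial ↥B, f ≠ 0 →
      (Polynomial.aeval (t₀ + b * u) f : T) ∉ Q := by
  classical
  haveI := hQ
  haveI : IsDomain (T ⧸ Q) := Ideal.Quotient.isDomain Q
  set ψ : ↥B →+* T ⧸ Q := (Ideal.Quotient.mk Q).comp B.subtype with hψ
  have hψinj : Function.Injective ψ := by
    rw [injective_iff_map_eq_zero]
    rintro ⟨x, hx⟩ hx0
    have : x ∈ Q := by
      rwa [hψ, RingHom.comp_apply, Ideal.Quotient.eq_zero_iff_mem] at hx0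
    exact Subtype.ext (hBQ x hx this)
  set bad : Set (T ⧸ Q) := ⋃ f : Polynomial ↥B, {α | f ≠ 0 ∧ (f.map ψ).eval α = 0} with hbad
  have hbadcard : #bad ≤ c := by
    refine le_trans (Cardinal.mk_iUnion_le _) ?_
    have h1 : #(Polynomial ↥B) ≤ c :=
      le_trans Polynomial.cardinalMk_le_max (max_le hBc hc)
    have h2 : ⨆ f : Polynomial ↥B, #{α | f ≠ 0 ∧ (f.map ψ).eval α = 0} ≤ ℵ₀ := by
      refine ciSup_le' (fun f => ?_)
      by_cases hf : f = 0
      · have : {α | f ≠ 0 ∧ (f.map ψ).eval α = 0} = ∅ := by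
          ext α; simp [hf]
        rw [this]
        simp
      · have hfin : {α | f ≠ 0 ∧ (f.map ψ).eval α = 0}.Finite := by
          refine Set.Finite.subset (Polynomial.finite_setOf_isRoot
            (p := f.map ψ) ?_) ?_
          · rwa [Ne, Polynomial.map_eq_zero_iff hψinj]
          · intro α hα
            exact hα.2
        exact hfin.lt_aleph0.le
    calc #(Polynomial ↥B) * ⨆ f : Polynomial ↥B, #{α | f ≠ 0 ∧ (f.map ψ).eval α = 0}
        ≤ c * ℵ₀ := mul_le_mul' h1 h2
    _ ≤ c * c := mul_le_mul' le_rfl hc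
    _ = c := Cardinal.mul_eq_self hc
  have hbne : Ideal.Quotient.mk Q b ≠ 0 := by
    rwa [Ne, Ideal.Quotient.eq_zero_iff_mem]
  set g : T ⧸ Q → T ⧸ Q := fun v => Ideal.Quotient.mk Q t₀ + Ideal.Quotient.mk Q b * v with hg
  have hginj : Function.Injective g := by
    intro v w hvw
    rw [hg] at hvw
    simp only [add_right_inj] at hvw
    exact mul_left_cancel₀ hbne hvw
  have hex : ∃ v, g v ∉ bad := by
    by_contra h
    push_neg at h
    have hsub : Set.range g ⊆ bad := by rintro _ ⟨v, rfl⟩; exact h v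
    have : #(T ⧸ Q) ≤ #bad := by
      rw [← Cardinal.mk_range_eq g hginj]
      exact Cardinal.mk_le_mk_of_subset hsub
    exact absurd (lt_of_lt_of_le hbig (le_trans this hbadcard)) (lt_irrefl c).elim
  obtain ⟨v, hv⟩ := hex
  obtain ⟨u, hu⟩ := Ideal.Quotient.mk_surjective v
  refine ⟨u, fun f hf hfQ => ?_⟩
  apply hv
  rw [hbad]
  refine Set.mem_iUnion.mpr ⟨f, hf, ?_⟩
  have h1 : Ideal.Quotient.mk Q (Polynomial.aeval (t₀ + b * u) f) = 0 :=
    Ideal.Quotient.eq_zero_iff_mem.mpr hfQ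
  rw [mk_aeval_eq] at h1
  have h2 : Ideal.Quotient.mk Q (t₀ + b * u) = g v := by
    rw [hg]
    simp only [map_add, map_mul, hu]
  rw [h2] at h1
  exact h1

/-- transcendence of `s` over `B` modulo `Q`. -/
def TransOver (B : Subring T) (s : T) (Q : Ideal T) : Prop :=
  ∀ f : Polynomial ↥B, f ≠ 0 → (Polynomial.aeval s f : T) ∉ Q

theorem transOver_of_le {B : Subring T} {s : T} {Q Q' : Ideal T} (hle : Q ≤ Q')
    (h : TransOver B s Q') : TransOver B s Q :=
  fun f hf hm => h f hf (hle hm)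

theorem transOver_congr {B : Subring T} {s s' : T} {Q : Ideal T} (hss' : s - s' ∈ Q)
    (h : TransOver B s' Q) : TransOver B s Q := by
  intro f hf hm
  refine h f hf ?_
  have hd : Polynomial.aeval s f - Polynomial.aeval s' f ∈ Q := aeval_sub_mem f hss'
  have : Polynomial.aeval s' f = Polynomial.aeval s f
      - (Polynomial.aeval s f - Polynomial.aeval s' f) := by ring
  rw [this]
  exact Submodule.sub_mem _ hm hd

/-- Multi-prime avoidance: choose `x ∈ J` making `t₀ + x` transcendental over `B`
modulo every associated prime. -/
theorem exists_avoid {c : Cardinal.{u}} (hc : ℵ₀ ≤ c)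
    (hbig : ∀ Q ∈ associatedPrimes T T, c < #(T ⧸ Q))
    (B : Subring T) (hBc : #B ≤ c) (hAv : Avoids B)
    (J : Ideal T) (hJ : ∀ Q ∈ associatedPrimes T T, ¬ J ≤ Q) (t₀ : T) :
    ∃ x ∈ J, ∀ Q ∈ associatedPrimes T T, TransOver B (t₀ + x) Q := by
  classical
  haveI : IsNoetherian T T := ‹IsNoetherianRing T›
  have hfin : (associatedPrimes T T).Finite := associatedPrimes_finite T T
  set Ω : Set (Ideal T) :=
    {Q ∈ associatedPrimes T T | ∀ Q' ∈ associatedPrimes T T, Q ≤ Q' → Q = Q'} with hΩ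
  have hΩfin : Ω.Finite := hfin.subset (Set.sep_subset _ _)
  set Ωs : Finset (Ideal T) := hΩfin.toFinset with hΩs
  have hΩmem : ∀ Q, Q ∈ Ωs ↔ Q ∈ Ω := fun Q => Set.Finite.mem_toFinset _
  have hchoice : ∀ Q ∈ Ωs, ∃ y : T, y ∈ J ∧ (∀ Q' ∈ Ωs.erase Q, y ∈ Q') ∧
      TransOver B (t₀ + y) Q := by
    intro Q hQs
    have hQΩ : Q ∈ Ω := (hΩmem Q).mp hQs
    have hass : Q ∈ associatedPrimes T T := hQΩ.1
    have hprime : Q.IsPrime := hass.isPrime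
    -- find d avoiding Q but inside all other maximal associated primes
    have hKnle : ¬ (Ωs.erase Q).inf id ≤ Q := by
      intro hK
      obtain ⟨Q', hQ'er, hle⟩ := (Ideal.IsPrime.inf_le' hprime).mp hK
      have hQ'Ω : Q' ∈ Ω := (hΩmem Q').mp (Finset.mem_of_mem_erase hQ'er)
      have : Q' = Q := hQ'Ω.2 Q hass hle
      exact (Finset.ne_of_mem_erase hQ'er) this
    obtain ⟨d, hdK, hdQ⟩ := SetLike.not_le_iff_exists.mp hKnle
    obtain ⟨j, hjJ, hjQ⟩ := SetLike.not_le_iff_exists.mp (hJ Q hass)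
    have hb : d * j ∉ Q := fun h => ((hprime.mem_or_mem h).elim hdQ hjQ)
    obtain ⟨u, hu⟩ := exists_trans_single hc hprime (hbig Q hass) B hBc
      (fun x hx hxQ => hAv Q hass x hx hxQ) t₀ (d * j) hb
    refine ⟨d * j * u, ?_, ?_, ?_⟩
    · rw [mul_assoc]
      exact Ideal.mul_mem_left _ _ (Ideal.mul_mem_right _ _ hjJ)
    · intro Q' hQ'er
      have hd' : d ∈ Q' := by
        have : (Ωs.erase Q).inf id ≤ id Q' := Finset.inf_le hQ'er
        exact this hdK
      exact Ideal.mul_mem_right _ _ (Ideal.mul_mem_right _ _ hd')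
    · intro f hf
      exact hu f hf
  choose Y hY using hchoice
  set x : T := ∑ Q ∈ Ωs.attach, Y Q.1 Q.2 with hx
  have hxJ : x ∈ J := Submodule.sum_mem _ (fun Q _ => (hY Q.1 Q.2).1)
  refine ⟨x, hxJ, ?_⟩
  -- first, transcendence modulo every maximal associated prime
  have hmax : ∀ Qm (hQms : Qm ∈ Ωs), TransOver B (t₀ + x) Qm := by
    intro Qm hQms
    have hsplit : Y Qm hQms + ∑ Q ∈ Ωs.attach.erase ⟨Qm, hQms⟩, Y Q.1 Q.2 = x := by
      rw [hx]
      exact Finset.add_sum_erase _ (fun Q : {q // q ∈ Ωs} => Y Q.1 Q.2) (Finset.mem_attach _ ⟨Qm, hQms⟩)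
    have hrest : ∑ Q ∈ Ωs.attach.erase ⟨Qm, hQms⟩, Y Q.1 Q.2 ∈ Qm := by
      refine Submodule.sum_mem _ (fun Q hQ => ?_)
      have hne : Q.1 ≠ Qm := by
        intro h
        have : Q = ⟨Qm, hQms⟩ := Subtype.ext h
        exact (Finset.ne_of_mem_erase hQ) this
      have hQmer : Qm ∈ Ωs.erase Q.1 := Finset.mem_erase.mpr ⟨fun h => hne h.symm, hQms⟩
      exact (hY Q.1 Q.2).2.1 Qm hQmer
    refine transOver_congr ?_ ((hY Qm hQms).2.2)
    have : (t₀ + x) - (t₀ + Y Qm hQms) = ∑ Q ∈ Ωs.attach.erase ⟨Qm, hQms⟩, Y Q.1 Q.2 := by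
      rw [← hsplit]; ring
    rw [this]
    exact hrest
  intro Q₀ hQ₀
  -- find a maximal associated prime above Q₀
  have hsfin : ({Q ∈ associatedPrimes T T | Q₀ ≤ Q}).Finite := hfin.subset (Set.sep_subset _ _)
  obtain ⟨Qm, hQm, hQmmax⟩ := Set.Finite.exists_maximalFor id _ hsfin ⟨Q₀, hQ₀, le_rfl⟩
  have hQmΩ : Qm ∈ Ωs := by
    rw [hΩmem]
    refine ⟨hQm.1, fun Q' hQ' hle => ?_⟩
    exact le_antisymm hle (hQmmax ⟨hQ', le_trans hQm.2 hle⟩ hle)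
  exact transOver_of_le hQm.2 (hmax Qm hQmΩ)

theorem avoids_adjoinEl_trans {B : Subring T} {s : T}
    (h : ∀ Q ∈ associatedPrimes T T, TransOver B s Q) : Avoids (adjoinEl B s) := by
  intro Q hQ u hu huQ
  obtain ⟨f, rfl⟩ := mem_adjoinEl_iff.mp hu
  by_cases hf : f = 0
  · rw [hf]; simp
  · exact absurd huQ (h Q hQ f hf)

theorem solve_linear {c : Cardinal.{u}} (hc : ℵ₀ ≤ c)
    (hbig : ∀ Q ∈ associatedPrimes T T, c < #(T ⧸ Q)) :
    ∀ (n : ℕ) (B : Subring T), Avoids B → #B ≤ c →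
    ∀ (a : Fin n → T), (∀ i, a i ∈ B) → ∀ c₀ ∈ B, c₀ ∈ Ideal.span (Set.range a) →
    ∃ B' : Subring T, B ≤ B' ∧ Avoids B' ∧ #B' ≤ c ∧
      ∃ t : Fin n → T, (∀ i, t i ∈ B') ∧ c₀ = ∑ i, a i * t i := by
  intro n
  induction n with
  | zero =>
    intro B hAv hBc a ha c₀ hc₀B hc₀span
    have hrange : Set.range a = ∅ := Set.range_eq_empty a
    rw [hrange, Ideal.span_empty, Ideal.mem_bot] at hc₀span
    exact ⟨B, le_rfl, hAv, hBc, fun _ => 0, fun i => i.elim0, by simp [hc₀span]⟩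
  | succ n ih =>
    intro B hAv hBc a ha c₀ hc₀B hc₀span
    obtain ⟨co, hsum⟩ := Ideal.mem_span_range_iff_exists_fun.mp hc₀span
    by_cases hzero : ∀ i : Fin n, a i.castSucc = 0
    · have hc₀ : c₀ = a (Fin.last n) * co (Fin.last n) := by
        rw [← hsum, Fin.sum_univ_castSucc]
        simp [hzero]
        ring
      by_cases haN : a (Fin.last n) = 0
      · refine ⟨B, le_rfl, hAv, hBc, fun _ => 0, fun i => B.zero_mem, ?_⟩
        simp [hc₀, haN]
      · refine ⟨adjoinEl B (co (Fin.last n)), le_adjoinEl B _, ?_, ?_, ?_⟩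
        · exact avoids_adjoinEl_quotient hAv (ha (Fin.last n)) hc₀B haN hc₀.symm
        · exact le_trans (mk_adjoinEl_le B _) (max_le hBc hc)
        · refine ⟨fun i => if i = Fin.last n then co (Fin.last n) else 0, ?_, ?_⟩
          · intro i
            dsimp only
            by_cases hi : i = Fin.last n
            · rw [if_pos hi]; exact mem_adjoinEl_self _ _
            · rw [if_neg hi]; exact Subring.zero_mem _
          · rw [Fin.sum_univ_castSucc]
            have h1 : ∀ i : Fin n, a i.castSucc *
                (if i.castSucc = Fin.last n then co (Fin.last n) else 0) = 0 := by
              intro i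
              rw [hzero i, zero_mul]
            rw [Finset.sum_congr rfl (fun i _ => h1 i)]
            simp [hc₀]
    · push_neg at hzero
      obtain ⟨j, hj⟩ := hzero
      set J : Ideal T := Ideal.span (Set.range fun i : Fin n => a i.castSucc) with hJ
      have hJQ : ∀ Q ∈ associatedPrimes T T, ¬ J ≤ Q := by
        intro Q hQ hle
        have : a j.castSucc ∈ Q := hle (Ideal.subset_span (Set.mem_range_self j))
        exact hj (hAv Q hQ _ (ha j.castSucc) this)
      obtain ⟨x, hxJ, htrans⟩ := exists_avoid hc hbig B hBc hAv J hJQ (co (Fin.last n))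
      set s : T := co (Fin.last n) + x with hs
      have hAv₁ : Avoids (adjoinEl B s) := avoids_adjoinEl_trans htrans
      have hB₁c : #(adjoinEl B s) ≤ c := le_trans (mk_adjoinEl_le B _) (max_le hBc hc)
      have hsB₁ : s ∈ adjoinEl B s := mem_adjoinEl_self _ _
      have hle₁ : B ≤ adjoinEl B s := le_adjoinEl _ _
      have key : c₀ - a (Fin.last n) * s
          = (∑ i : Fin n, co i.castSucc * a i.castSucc) - a (Fin.last n) * x := by
        rw [← hsum, Fin.sum_univ_castSucc, hs]
        ring
      have hc₁B : c₀ - a (Fin.last n) * s ∈ adjoinEl B s :=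
        Subring.sub_mem _ (hle₁ hc₀B) (Subring.mul_mem _ (hle₁ (ha (Fin.last n))) hsB₁)
      have hc₁span : c₀ - a (Fin.last n) * s ∈ J := by
        rw [key]
        refine Submodule.sub_mem _ ?_ (Ideal.mul_mem_left _ _ hxJ)
        refine Submodule.sum_mem _ (fun i _ => ?_)
        exact Ideal.mul_mem_left _ _ (Ideal.subset_span (Set.mem_range_self i))
      obtain ⟨B', hB'le, hAv', hB'c, t', ht'mem, ht'sum⟩ :=
        ih (adjoinEl B s) hAv₁ hB₁c (fun i => a i.castSucc)
          (fun i => hle₁ (ha i.castSucc)) _ hc₁B hc₁span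
      refine ⟨B', le_trans hle₁ hB'le, hAv', hB'c, Fin.snoc t' s, ?_, ?_⟩
      · intro i
        refine Fin.lastCases ?_ ?_ i
        · rw [Fin.snoc_last]
          exact hB'le hsB₁
        · intro i'
          rw [Fin.snoc_castSucc]
          exact ht'mem i'
      · rw [Fin.sum_univ_castSucc]
        have h1 : ∀ i : Fin n, a i.castSucc * (Fin.snoc t' s : Fin (n+1) → T) i.castSucc
            = a i.castSucc * t' i := by
          intro i
          rw [Fin.snoc_castSucc]
        rw [Finset.sum_congr rfl (fun i _ => h1 i), Fin.snoc_last, ← ht'sum]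
        ring

/-! ### Tasks and the bulk-closure construction -/

/-- Tasks over a stage subring `B`: either an ideal-membership task or an inverse task. -/
def TaskOf (B : Subring T) : Type u := (List ↥B × ↥B) ⊕ ↥B

/-- What it means for a subring `C'` to solve a task of `B`. -/
def TaskSolved (B : Subring T) (C' : Subring T) : TaskOf B → Prop
  | Sum.inl (l, c₀) =>
      ((c₀ : T) ∈ Ideal.span (Set.range (fun i : Fin l.length => (l.get i : T)))) →
        ∃ t : Fin l.length → T, (∀ i, t i ∈ C') ∧
          (c₀ : T) = ∑ i, (l.get i : T) * t i
  | Sum.inr b =>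
      ((b : T) ∉ IsLocalRing.maximalIdeal T) → ∃ y ∈ C', (b : T) * y = 1

theorem taskSolved_mono {B C' C'' : Subring T} (h : C' ≤ C'') {γ : TaskOf B}
    (hs : TaskSolved B C' γ) : TaskSolved B C'' γ := by
  cases γ with
  | inl p =>
    rcases p with ⟨l, c₀⟩
    intro hmem
    obtain ⟨t, ht, hsum⟩ := hs hmem
    exact ⟨t, fun i => h (ht i), hsum⟩
  | inr b =>
    intro hb
    obtain ⟨y, hy, hmul⟩ := hs hb
    exact ⟨y, h hy, hmul⟩

theorem mk_taskOf_le {c : Cardinal.{u}} (hc : ℵ₀ ≤ c) {B : Subring T} (hBc : #B ≤ c) :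
    #(TaskOf B) ≤ c := by
  have h1 : #(List ↥B) ≤ c := le_trans (Cardinal.mk_list_le_max ↥B) (max_le hc hBc)
  have h2 : #(List ↥B × ↥B) ≤ c := by
    rw [Cardinal.mk_prod, Cardinal.lift_id, Cardinal.lift_id]
    exact le_trans (mul_le_mul' h1 hBc) (le_of_eq (Cardinal.mul_eq_self hc))
  have : #(TaskOf B) = #(List ↥B × ↥B) + #(↥B) := by
    rw [show TaskOf B = ((List ↥B × ↥B) ⊕ ↥B) from rfl, Cardinal.mk_sum,
      Cardinal.lift_id, Cardinal.lift_id]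
  rw [this]
  exact le_trans (add_le_add h2 hBc) (le_of_eq (Cardinal.add_eq_self hc))

theorem exists_solver {c : Cardinal.{u}} (hc : ℵ₀ ≤ c)
    (hbig : ∀ Q ∈ associatedPrimes T T, c < #(T ⧸ Q))
    {B C : Subring T} (hBC : B ≤ C) (hAv : Avoids C) (hCc : #C ≤ c) (γ : TaskOf B) :
    ∃ C' : Subring T, C ≤ C' ∧ Avoids C' ∧ #C' ≤ c ∧ TaskSolved B C' γ := by
  cases γ with
  | inl p =>
    rcases p with ⟨l, c₀⟩
    by_cases hmem : (c₀ : T) ∈ Ideal.span (Set.range (fun i : Fin l.length => (l.get i : T)))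
    · obtain ⟨C', hle, hAv', hCc', t, ht, hsum⟩ :=
        solve_linear hc hbig l.length C hAv hCc (fun i => (l.get i : T))
          (fun i => hBC (l.get i).2) c₀ (hBC c₀.2) hmem
      exact ⟨C', hle, hAv', hCc', fun _ => ⟨t, ht, hsum⟩⟩
    · exact ⟨C, le_rfl, hAv, hCc, fun h => absurd h hmem⟩
  | inr b =>
    by_cases hb : (b : T) ∉ IsLocalRing.maximalIdeal T
    · have hunit : IsUnit (b : T) := by
        by_contra h
        exact hb (h : (b : T) ∈ nonunits T)
      obtain ⟨v, hv⟩ := hunit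
      have hb0 : (b : T) ≠ 0 := by
        intro h
        exact hb (h ▸ (IsLocalRing.maximalIdeal T).zero_mem)
      have hmul : (b : T) * (↑v⁻¹ : T) = 1 := by
        rw [← hv]
        exact v.mul_inv
      refine ⟨adjoinEl C (↑v⁻¹ : T), le_adjoinEl _ _, ?_, ?_, ?_⟩
      · exact avoids_adjoinEl_quotient hAv (hBC b.2) C.one_mem hb0 hmul
      · exact le_trans (mk_adjoinEl_le C _) (max_le hCc hc)
      · exact fun _ => ⟨(↑v⁻¹ : T), mem_adjoinEl_self _ _, hmul⟩
    · exact ⟨C, le_rfl, hAv, hCc, fun h => absurd h hb⟩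

open scoped Classical in
/-- One (well-founded recursion) step: extend `C` to solve task `γ`, if possible. -/
noncomputable def solveStep (c : Cardinal.{u}) (B C : Subring T) (γ : TaskOf B) : Subring T :=
  if h : ∃ C', C ≤ C' ∧ Avoids C' ∧ #C' ≤ c ∧ TaskSolved B C' γ then h.choose else C

theorem solveStep_spec {c : Cardinal.{u}} {B C : Subring T} {γ : TaskOf B}
    (h : ∃ C', C ≤ C' ∧ Avoids C' ∧ #C' ≤ c ∧ TaskSolved B C' γ) :
    C ≤ solveStep c B C γ ∧ Avoids (solveStep c B C γ) ∧ #(solveStep c B C γ) ≤ c ∧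
      TaskSolved B (solveStep c B C γ) γ := by
  rw [solveStep, dif_pos h]
  exact h.choose_spec

/-- Transfinite recursion over tasks via an auxiliary well-order. -/
noncomputable def stageFun (c : Cardinal.{u}) (B : Subring T) : TaskOf B → Subring T :=
  (IsWellFounded.wf (r := (WellOrderingRel : TaskOf B → TaskOf B → Prop))).fix
    (fun γ ih => solveStep c B
      (B ⊔ ⨆ γ' : {γ' : TaskOf B // WellOrderingRel γ' γ}, ih γ'.1 γ'.2) γ)

theorem stageFun_eq (c : Cardinal.{u}) (B : Subring T) (γ : TaskOf B) :
    stageFun c B γ = solveStep c B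
      (B ⊔ ⨆ γ' : {γ' : TaskOf B // WellOrderingRel γ' γ}, stageFun c B γ'.1) γ :=
  WellFounded.fix_eq _ _ _

section DirectedSup
variable {ι : Type u} (f : ι → Subring T) (B : Subring T)

theorem mem_sup_iSup_iff (hBf : ∀ i, B ≤ f i)
    (hchain : ∀ i j, f i ≤ f j ∨ f j ≤ f i) (x : T) :
    x ∈ B ⊔ ⨆ i, f i ↔ x ∈ B ∨ ∃ i, x ∈ f i := by
  classical
  set g : Option ι → Subring T := fun o => o.elim B f with hg
  have hdir : Directed (· ≤ ·) g := by
    rintro (_ | i) (_ | j)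
    · exact ⟨Option.none, le_rfl, le_rfl⟩
    · exact ⟨Option.some j, hBf j, le_rfl⟩
    · exact ⟨Option.some i, le_rfl, hBf i⟩
    · rcases hchain i j with h | h
      · exact ⟨Option.some j, h, le_rfl⟩
      · exact ⟨Option.some i, le_rfl, h⟩
  have heq : B ⊔ ⨆ i, f i = ⨆ o, g o := by
    apply le_antisymm
    · refine sup_le (le_iSup g Option.none) (iSup_le (fun i => le_iSup g (Option.some i)))
    · refine iSup_le (fun o => ?_)
      match o with
      | Option.none => exact le_sup_left
      | Option.some i => exact le_trans (le_iSup f i) le_sup_right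
  rw [heq, Subring.mem_iSup_of_directed hdir]
  constructor
  · rintro ⟨(_ | i), h⟩
    · exact Or.inl h
    · exact Or.inr ⟨i, h⟩
  · rintro (h | ⟨i, h⟩)
    · exact ⟨Option.none, h⟩
    · exact ⟨Option.some i, h⟩

theorem mk_sup_iSup_le {c : Cardinal.{u}} (hc : ℵ₀ ≤ c)
    (hBf : ∀ i, B ≤ f i) (hchain : ∀ i j, f i ≤ f j ∨ f j ≤ f i)
    (hι : #ι ≤ c) (hB : #B ≤ c) (hf : ∀ i, #(f i) ≤ c) :
    #(B ⊔ ⨆ i, f i : Subring T) ≤ c := by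
  classical
  have hsub : ((B ⊔ ⨆ i, f i : Subring T) : Set T) ⊆
      (B : Set T) ∪ ⋃ i, (f i : Set T) := by
    intro x hx
    rcases (mem_sup_iSup_iff f B hBf hchain x).mp hx with h | ⟨i, h⟩
    · exact Or.inl h
    · exact Or.inr (Set.mem_iUnion.mpr ⟨i, h⟩)
  have h1 : #((B : Set T) ∪ ⋃ i, (f i : Set T) : Set T) ≤ c := by
    refine le_trans (Cardinal.mk_union_le _ _) ?_
    have h2 : #(⋃ i, (f i : Set T) : Set T) ≤ c := by
      refine le_trans (Cardinal.mk_iUnion_le _) ?_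
      refine le_trans (mul_le_mul' hι (ciSup_le' (fun i => hf i))) ?_
      exact le_of_eq (Cardinal.mul_eq_self hc)
    exact le_trans (add_le_add hB h2) (le_of_eq (Cardinal.add_eq_self hc))
  exact le_trans (Cardinal.mk_le_mk_of_subset hsub) h1

end DirectedSup

theorem stageFun_props {c : Cardinal.{u}} (hc : ℵ₀ ≤ c)
    (hbig : ∀ Q ∈ associatedPrimes T T, c < #(T ⧸ Q))
    {B : Subring T} (hAvB : Avoids B) (hBc : #B ≤ c) :
    ∀ γ : TaskOf B, (B ≤ stageFun c B γ) ∧ Avoids (stageFun c B γ) ∧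
      #(stageFun c B γ) ≤ c ∧ TaskSolved B (stageFun c B γ) γ ∧
      (∀ γ', WellOrderingRel γ' γ → stageFun c B γ' ≤ stageFun c B γ) := by
  have hΓc : #(TaskOf B) ≤ c := mk_taskOf_le hc hBc
  intro γ
  induction γ using (IsWellFounded.wf
      (r := (WellOrderingRel : TaskOf B → TaskOf B → Prop))).induction with
  | _ γ IH =>
    set base : Subring T :=
      B ⊔ ⨆ γ' : {γ' : TaskOf B // WellOrderingRel γ' γ}, stageFun c B γ'.1 with hbase
    have hBf : ∀ γ' : {γ' : TaskOf B // WellOrderingRel γ' γ}, B ≤ stageFun c B γ'.1 :=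
      fun γ' => (IH γ'.1 γ'.2).1
    have hchain : ∀ γ'₁ γ'₂ : {γ' : TaskOf B // WellOrderingRel γ' γ},
        stageFun c B γ'₁.1 ≤ stageFun c B γ'₂.1 ∨
        stageFun c B γ'₂.1 ≤ stageFun c B γ'₁.1 := by
      intro γ'₁ γ'₂
      rcases trichotomous_of (WellOrderingRel : TaskOf B → TaskOf B → Prop) γ'₁.1 γ'₂.1
        with h | h | h
      · exact Or.inl ((IH γ'₂.1 γ'₂.2).2.2.2.2 γ'₁.1 h)
      · rw [h]
        exact Or.inl le_rfl
      · exact Or.inr ((IH γ'₁.1 γ'₁.2).2.2.2.2 γ'₂.1 h)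
    have hBbase : B ≤ base := le_sup_left
    have hAvbase : Avoids base := by
      intro Q hQ x hx hxQ
      rcases (mem_sup_iSup_iff _ B hBf hchain x).mp hx with h | ⟨γ', h⟩
      · exact hAvB Q hQ x h hxQ
      · exact (IH γ'.1 γ'.2).2.1 Q hQ x h hxQ
    have hbasec : #base ≤ c := by
      refine mk_sup_iSup_le _ B hc hBf hchain ?_ hBc (fun γ' => (IH γ'.1 γ'.2).2.2.1)
      exact le_trans (Cardinal.mk_subtype_le _) hΓc
    have hex : ∃ C', base ≤ C' ∧ Avoids C' ∧ #C' ≤ c ∧ TaskSolved B C' γ :=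
      exists_solver hc hbig hBbase hAvbase hbasec γ
    have hspec := solveStep_spec hex
    rw [← stageFun_eq] at hspec
    refine ⟨le_trans hBbase hspec.1, hspec.2.1, hspec.2.2.1, hspec.2.2.2, ?_⟩
    intro γ' hγ'
    refine le_trans ?_ hspec.1
    exact le_trans (le_iSup (fun γ'' : {γ'' : TaskOf B // WellOrderingRel γ'' γ} =>
      stageFun c B γ''.1) ⟨γ', hγ'⟩) le_sup_right

/-- Bulk closure: one subring solving all tasks of `B` at once. -/
theorem bulk_closure {c : Cardinal.{u}} (hc : ℵ₀ ≤ c)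
    (hbig : ∀ Q ∈ associatedPrimes T T, c < #(T ⧸ Q))
    {B : Subring T} (hAvB : Avoids B) (hBc : #B ≤ c) :
    ∃ C : Subring T, B ≤ C ∧ Avoids C ∧ #C ≤ c ∧ ∀ γ : TaskOf B, TaskSolved B C γ := by
  have hprops := stageFun_props hc hbig hAvB hBc
  have hchain : ∀ γ₁ γ₂ : TaskOf B, stageFun c B γ₁ ≤ stageFun c B γ₂ ∨
      stageFun c B γ₂ ≤ stageFun c B γ₁ := by
    intro γ₁ γ₂
    rcases trichotomous_of (WellOrderingRel : TaskOf B → TaskOf B → Prop) γ₁ γ₂ with h | h | h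
    · exact Or.inl ((hprops γ₂).2.2.2.2 γ₁ h)
    · rw [h]; exact Or.inl le_rfl
    · exact Or.inr ((hprops γ₁).2.2.2.2 γ₂ h)
  refine ⟨B ⊔ ⨆ γ : TaskOf B, stageFun c B γ, le_sup_left, ?_, ?_, ?_⟩
  · intro Q hQ x hx hxQ
    rcases (mem_sup_iSup_iff _ B (fun γ => (hprops γ).1) hchain x).mp hx with h | ⟨γ, h⟩
    · exact hAvB Q hQ x h hxQ
    · exact (hprops γ).2.1 Q hQ x h hxQ
  · exact mk_sup_iSup_le _ B hc (fun γ => (hprops γ).1) hchain (mk_taskOf_le hc hBc) hBc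
      (fun γ => (hprops γ).2.2.1)
  · intro γ
    refine taskSolved_mono ?_ ((hprops γ).2.2.2.1)
    exact le_trans (le_iSup (fun γ' : TaskOf B => stageFun c B γ') γ) le_sup_right

theorem exists_task_list (B : Subring T) (L : List T) (hg : ∀ b ∈ L, b ∈ B) :
    ∃ l : List ↥B, ∀ y : T, (∃ i : Fin l.length, ((l.get i : ↥B) : T) = y) ↔ y ∈ L := by
  induction L with
  | nil => exact ⟨[], fun y => ⟨fun ⟨i, _⟩ => i.elim0, fun h => absurd h List.not_mem_nil⟩⟩
  | cons a L' ih =>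
    obtain ⟨l', hl'⟩ := ih (fun b hb => hg b (List.mem_cons_of_mem a hb))
    refine ⟨⟨a, hg a (List.mem_cons_self)⟩ :: l', fun y => ?_⟩
    constructor
    · rintro ⟨i, rfl⟩
      refine Fin.cases ?_ ?_ i
      · exact List.mem_cons_self
      · intro j
        exact List.mem_cons_of_mem a ((hl' _).mp ⟨j, rfl⟩)
    · intro hy
      rcases List.mem_cons.mp hy with h | h
      · exact ⟨⟨0, by simp⟩, h.symm⟩
      · obtain ⟨j, hj⟩ := (hl' y).mpr h
        exact ⟨j.succ, hj⟩

/-- Let `(T, M)` be a complete local ring with `M ∉ Ass(T)`,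
`t̄ ∈ T/M²`, and `R` a PB-subring of `T`. Then there is a PB-subring `S` with
`R ⊆ S ⊆ T`, `|S| = sup{|R|, ℵ₀}`, `t̄` in the image of `S → T/M²`, and
`IT ∩ S = I` for every finitely generated ideal `I` of `S`. -/
theorem stmt_14 {T : Type u} [CommRing T] [IsLocalRing T] [IsNoetherianRing T]
    [IsAdicComplete (IsLocalRing.maximalIdeal T) T]
    (hM : IsLocalRing.maximalIdeal T ∉ associatedPrimes T T)
    (t : T ⧸ (IsLocalRing.maximalIdeal T) ^ 2)
    (R : Subring T) (hR : IsPBSubring R) :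
    ∃ S : Subring T, IsPBSubring S ∧ R ≤ S ∧
      Cardinal.mk S = max (Cardinal.mk R) Cardinal.aleph0 ∧
      (∃ s ∈ S, Ideal.Quotient.mk ((IsLocalRing.maximalIdeal T) ^ 2) s = t) ∧
      (∀ I : Ideal S, I.FG → Ideal.comap S.subtype (Ideal.map S.subtype I) = I) := by
  classical
  revert hM t
  set MM : Ideal T := IsLocalRing.maximalIdeal T with hMM
  intro hM t
  set c : Cardinal.{u} := max (Cardinal.mk R) Cardinal.aleph0 with hc_def
  have hc : ℵ₀ ≤ c := le_max_right _ _
  have hRc : #R ≤ c := le_max_left _ _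
  have hAvR : Avoids R := hR.2.2.2
  haveI : IsNoetherian T T := ‹IsNoetherianRing T›
  -- If T/M is uncountable then c < #(T/M)
  have hclt : ¬ #(T ⧸ MM) ≤ ℵ₀ → c < #(T ⧸ MM) := by
    intro hco
    push_neg at hco
    have hmax : max ℵ₀ #(T ⧸ MM) = #(T ⧸ MM) := max_eq_right hco.le
    have hne : #R ≠ #(T ⧸ MM) := by
      intro h
      have hcnt : Countable (T ⧸ MM) := hR.2.2.1 (by rw [hmax]; exact h)
      rw [← Cardinal.mk_le_aleph0_iff] at hcnt
      exact absurd hcnt (not_le.mpr hco)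
    have hlt : #R < #(T ⧸ MM) := lt_of_le_of_ne (by rw [← hmax]; exact hR.2.1) hne
    exact max_lt hlt hco
  -- every residue ring T/Q for associated Q is bigger than c
  have hbig : ∀ Q ∈ associatedPrimes T T, c < #(T ⧸ Q) := by
    intro Q hQ
    have hun : ℵ₀ < #(T ⧸ Q) := aleph0_lt_quot_ass hM hQ
    have hfac : #(T ⧸ MM) ≤ #(T ⧸ Q) := by
      have hle : Q ≤ MM := assq_le_max hQ
      have hsurj : Function.Surjective (Ideal.Quotient.factor hle) := by
        intro y
        obtain ⟨x, hx⟩ := Ideal.Quotient.mk_surjective y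
        exact ⟨Ideal.Quotient.mk Q x, by rw [Ideal.Quotient.factor_mk, hx]⟩
      exact Cardinal.mk_le_of_surjective hsurj
    by_cases hco : #(T ⧸ MM) ≤ ℵ₀
    · have h1 : #R ≤ ℵ₀ := le_trans hR.2.1 (max_le le_rfl hco)
      have h2 : c = ℵ₀ := le_antisymm (max_le h1 le_rfl) hc
      rw [h2]
      exact hun
    · exact lt_of_lt_of_le (hclt hco) hfac
  -- choose the representative s₀ of t
  obtain ⟨t₀, ht₀⟩ := Ideal.Quotient.mk_surjective t
  have hJQ : ∀ Q ∈ associatedPrimes T T, ¬ MM ^ 2 ≤ Q := by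
    intro Q hQ hle
    have h1 : MM * MM ≤ Q := by rwa [← pow_two]
    have h2 : MM ≤ Q := ((hQ.isPrime.mul_le).mp h1).elim id id
    have h3 : MM = Q := le_antisymm h2 (assq_le_max hQ)
    rw [h3] at hM
    exact hM hQ
  obtain ⟨x0, hx0M2, htrans⟩ := exists_avoid hc hbig R hRc hAvR (MM ^ 2) hJQ t₀
  set s₀ : T := t₀ + x0 with hs₀
  set B₀ : Subring T := adjoinEl R s₀ with hB₀
  have hAvB₀ : Avoids B₀ := avoids_adjoinEl_trans htrans
  have hB₀c : #B₀ ≤ c := le_trans (mk_adjoinEl_le R s₀) (max_le hRc hc)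
  have hRB₀ : R ≤ B₀ := le_adjoinEl R s₀
  have hs₀B₀ : s₀ ∈ B₀ := mem_adjoinEl_self R s₀
  have hs₀t : Ideal.Quotient.mk (MM ^ 2) s₀ = t := by
    rw [hs₀, map_add, Ideal.Quotient.eq_zero_iff_mem.mpr hx0M2, add_zero, ht₀]
  -- build the countable chain of bulk closures
  have hbulkP : ∀ p : {B : Subring T // Avoids B ∧ #B ≤ c},
      ∃ C : Subring T, p.1 ≤ C ∧ Avoids C ∧ #C ≤ c ∧
        ∀ γ : TaskOf p.1, TaskSolved p.1 C γ :=
    fun p => bulk_closure hc hbig p.2.1 p.2.2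
  choose stepC hstep1 hstep2 hstep3 hstep4 using hbulkP
  set Step : {B : Subring T // Avoids B ∧ #B ≤ c} → {B : Subring T // Avoids B ∧ #B ≤ c} :=
    fun p => ⟨stepC p, hstep2 p, hstep3 p⟩ with hStep
  set Ch : ℕ → {B : Subring T // Avoids B ∧ #B ≤ c} :=
    fun n => Step^[n] ⟨B₀, hAvB₀, hB₀c⟩ with hCh
  have hChsucc : ∀ n, Ch (n+1) = Step (Ch n) := fun n => Function.iterate_succ_apply' Step n _
  have hmono : Monotone (fun n => (Ch n).1) := by
    refine monotone_nat_of_le_succ (fun n => ?_)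
    rw [hChsucc n]
    exact hstep1 (Ch n)
  have hCh0 : (Ch 0).1 = B₀ := rfl
  set Ch' : ULift.{u} ℕ → Subring T := fun n => (Ch n.down).1 with hCh'
  have hchain' : ∀ i j : ULift.{u} ℕ, Ch' i ≤ Ch' j ∨ Ch' j ≤ Ch' i := fun i j =>
    (le_total i.down j.down).imp (fun h => hmono h) (fun h => hmono h)
  have hBf' : ∀ i, B₀ ≤ Ch' i := fun i => by
    rw [← hCh0]
    exact hmono (Nat.zero_le _)
  set S : Subring T := B₀ ⊔ ⨆ i, Ch' i with hSdef
  have hmemS : ∀ y : T, y ∈ S ↔ ∃ n : ℕ, y ∈ (Ch n).1 := by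
    intro y
    rw [hSdef, mem_sup_iSup_iff Ch' B₀ hBf' hchain' y]
    constructor
    · rintro (h | ⟨i, h⟩)
      · exact ⟨0, h⟩
      · exact ⟨i.down, h⟩
    · rintro ⟨n, h⟩
      exact Or.inr ⟨ULift.up n, h⟩
  have hSsub : ∀ n, (Ch n).1 ≤ S := fun n y hy => (hmemS y).mpr ⟨n, hy⟩
  have hB₀S : B₀ ≤ S := le_sup_left
  have hAvS : Avoids S := by
    intro Q hQ x hx hxQ
    obtain ⟨n, hn⟩ := (hmemS x).mp hx
    exact (Ch n).2.1 Q hQ x hn hxQ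
  have hulift : #(ULift.{u} ℕ) ≤ c := by
    rw [Cardinal.mk_uLift, Cardinal.mk_nat, Cardinal.lift_aleph0]
    exact hc
  have hSc : #S ≤ c := by
    rw [hSdef]
    exact mk_sup_iSup_le Ch' B₀ hc hBf' hchain' hulift hB₀c (fun i => (Ch i.down).2.2)
  have hRS : R ≤ S := le_trans hRB₀ hB₀S
  have hs₀S : s₀ ∈ S := hB₀S hs₀B₀
  have hsolve : ∀ (n : ℕ) (γ : TaskOf (Ch n).1), TaskSolved (Ch n).1 S γ := by
    intro n γ
    have h1 : (Ch (n+1)).1 = stepC (Ch n) := by rw [hChsucc n]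
    refine taskSolved_mono ?_ (hstep4 (Ch n) γ)
    rw [← h1]
    exact hSsub (n+1)
  -- S is infinite
  obtain ⟨Qw, hQw⟩ := associatedPrimes.nonempty T T
  haveI : Nontrivial (↥R) := ⟨⟨0, 1, fun h => by
    have := congrArg (Subtype.val) h
    exact zero_ne_one (α := T) this⟩⟩
  have hpowkey : ∀ a b : ℕ, a < b → s₀ ^ a ≠ s₀ ^ b := by
    intro a b hab heq
    set f : Polynomial ↥R := Polynomial.X ^ b - Polynomial.X ^ a with hf
    have hf0 : f ≠ 0 := by
      intro h
      have hcoeff : f.coeff b = 1 := by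
        simp [hf, Polynomial.coeff_X_pow]
        omega
      rw [h, Polynomial.coeff_zero] at hcoeff
      exact one_ne_zero hcoeff.symm
    have heval : Polynomial.aeval s₀ f = 0 := by
      rw [hf, map_sub, Polynomial.aeval_X_pow, Polynomial.aeval_X_pow, heq, sub_self]
    exact htrans Qw hQw f hf0 (heval ▸ Qw.zero_mem)
  have hSinf : ℵ₀ ≤ #S := by
    have hinj : Function.Injective (fun n : ULift.{u} ℕ =>
        (⟨s₀ ^ n.down, S.pow_mem hs₀S n.down⟩ : ↥S)) := by
      intro a b hab
      have h1 : s₀ ^ a.down = s₀ ^ b.down := congrArg Subtype.val hab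
      rcases Nat.lt_trichotomy a.down b.down with h | h | h
      · exact absurd h1 (hpowkey _ _ h)
      · exact ULift.ext a b h
      · exact absurd h1.symm (hpowkey _ _ h)
    have := Cardinal.mk_le_of_injective hinj
    rwa [Cardinal.mk_uLift, Cardinal.mk_nat, Cardinal.lift_aleph0] at this
  have hRleS : #R ≤ #S := by
    have hinj : Function.Injective (fun r : ↥R => (⟨(r : T), hRS r.2⟩ : ↥S)) := by
      intro a b hab
      have h1 : (a : T) = (b : T) := congrArg (fun z : ↥S => (z : T)) hab
      exact Subtype.ext h1
    exact Cardinal.mk_le_of_injective hinj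
  have hScard : #S = max #R ℵ₀ := le_antisymm hSc (max_le hRleS hSinf)
  refine ⟨S, ⟨?_, ?_, ?_, hAvS⟩, hRS, hScard, ⟨s₀, hs₀S, hs₀t⟩, ?_⟩
  · -- quasi-local
    rintro ⟨r, hrS⟩ hrM
    obtain ⟨n, hn⟩ := (hmemS r).mp hrS
    obtain ⟨y, hyS, hmul⟩ := hsolve n (Sum.inr ⟨r, hn⟩) hrM
    exact IsUnit.of_mul_eq_one ⟨y, hyS⟩ (Subtype.ext (by simpa using hmul))
  · -- cardinality bound
    exact le_trans hSc (max_le hR.2.1 (le_max_left _ _))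
  · -- equality implies countable
    intro hSeq
    by_cases hco : #(T ⧸ MM) ≤ ℵ₀
    · exact Cardinal.mk_le_aleph0_iff.mp hco
    · exfalso
      have h1 : c < #(T ⧸ MM) := hclt hco
      have h2 : #(T ⧸ MM) ≤ max ℵ₀ #(T ⧸ MM) := le_max_right _ _
      rw [← hSeq] at h2
      exact absurd (lt_of_le_of_lt (le_trans h2 hSc) h1) (lt_irrefl _)
  · -- finitely generated ideals contract correctly
    intro I hI
    obtain ⟨fs, hfs⟩ := hI
    refine le_antisymm ?_ Ideal.le_comap_map
    intro x hx
    have hx' : (x : T) ∈ Ideal.span (⇑S.subtype '' ↑fs) := by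
      have h1 : (x : T) ∈ Ideal.map S.subtype I := hx
      rw [← hfs, Ideal.map_span] at h1
      exact h1
    -- find a common stage for x and the generators
    have hbs : ∀ b : ↥S, ∃ n, (b : T) ∈ (Ch n).1 := fun b => (hmemS b).mp b.2
    choose st hst using hbs
    set N : ℕ := max (st x) (fs.sup st) with hN
    have hxN : (x : T) ∈ (Ch N).1 := hmono (le_max_left _ _) (hst x)
    have hgN : ∀ b ∈ fs, (b : T) ∈ (Ch N).1 := fun b hb =>
      hmono (le_trans (Finset.le_sup hb) (le_max_right _ _)) (hst b)
    -- build the task list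
    obtain ⟨l, hlspec⟩ := exists_task_list (Ch N).1 (fs.toList.map (fun b : ↥S => (b : T)))
      (by
        intro b hb
        obtain ⟨b', hb', rfl⟩ := List.mem_map.mp hb
        exact hgN b' (Finset.mem_toList.mp hb'))
    have hlist_mem : ∀ y : T, y ∈ fs.toList.map (fun b : ↥S => (b : T)) ↔
        ∃ b ∈ fs, (b : T) = y := by
      intro y
      rw [List.mem_map]
      constructor
      · rintro ⟨b, hb, rfl⟩
        exact ⟨b, Finset.mem_toList.mp hb, rfl⟩
      · rintro ⟨b, hb, rfl⟩
        exact ⟨b, Finset.mem_toList.mpr hb, rfl⟩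
    have hgl : ∀ i : Fin l.length, ∃ b ∈ fs, (b : T) = ((l.get i : ↥(Ch N).1) : T) :=
      fun i => (hlist_mem _).mp ((hlspec _).mp ⟨i, rfl⟩)
    have hranges : Set.range (fun i : Fin l.length => ((l.get i : ↥(Ch N).1) : T))
        = ⇑S.subtype '' ↑fs := by
      ext y
      constructor
      · rintro ⟨i, rfl⟩
        obtain ⟨b, hb, hbe⟩ := hgl i
        exact ⟨b, hb, hbe⟩
      · rintro ⟨b, hb, rfl⟩
        obtain ⟨i, hi⟩ := (hlspec (b : T)).mpr ((hlist_mem _).mpr ⟨b, hb, rfl⟩)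
        exact ⟨i, hi⟩
    have hsp : (x : T) ∈ Ideal.span (Set.range
        (fun i : Fin l.length => ((l.get i : ↥(Ch N).1) : T))) := by
      rw [hranges]
      exact hx'
    obtain ⟨tt, htt, hsum⟩ := hsolve N (Sum.inl (l, ⟨(x : T), hxN⟩)) hsp
    -- conclude x ∈ I
    set gg : Fin l.length → ↥S := fun i => ⟨((l.get i : ↥(Ch N).1) : T), hSsub N (l.get i).2⟩
      with hgg
    set ττ : Fin l.length → ↥S := fun i => ⟨tt i, htt i⟩ with hττ
    have hxsum : x = ∑ i, gg i * ττ i := by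
      apply Subtype.ext
      have h1 : ((∑ i, gg i * ττ i : ↥S) : T) = ∑ i, ((l.get i : ↥(Ch N).1) : T) * tt i := by
        rw [AddSubmonoidClass.coe_finset_sum]
        refine Finset.sum_congr rfl (fun i _ => ?_)
        rfl
      rw [h1]
      exact hsum
    rw [← hfs, hxsum]
    refine Submodule.sum_mem _ (fun i _ => ?_)
    obtain ⟨b, hb, hbe⟩ := hgl i
    have hggb : gg i = b := by
      apply Subtype.ext
      rw [hgg, ← hbe]
    rw [hggb]
    exact Ideal.mul_mem_right _ _ (Ideal.subset_span hb)
end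

section
/- Let R be a Noetherian commutative ring such that Spec(R) is infinite. Then |Spec(R)| = |{P ∈ Spec(R) : ht(P) = 1}|, i.e., the set of prime ideals of R has the same cardinality as its subset of height-one prime ideals. -/
set_option synthInstance.maxHeartbeats 1000000
set_option maxHeartbeats 1000000
set_option linter.unreachableTactic false
set_option linter.unusedTactic false

open Ideal

universe u



/-- A Noetherian ring with a nilpotent maximal ideal is Artinian. -/
lemma artinianOfNilpotentMax {T : Type*} [CommRing T] [IsNoetherianRing T]
    (m : Ideal T) (hm : m.IsMaximal) (k : ℕ) (hk : m ^ k = ⊥) : IsArtinianRing T := by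
  have key : ∀ i : ℕ, IsArtinian T (T ⧸ (m ^ i : Ideal T)) := by
    intro i
    induction i with
    | zero =>
        have h0 : (m ^ 0 : Ideal T) = ⊤ := by rw [pow_zero, Ideal.one_eq_top]
        have : Subsingleton (T ⧸ (m ^ 0 : Ideal T)) := by
          rw [Submodule.Quotient.subsingleton_iff]; exact h0
        exact isArtinian_of_finite
    | succ i ih =>
        set p : Submodule T T := (m ^ (i + 1) : Ideal T) with hp
        set q : Submodule T T := (m ^ i : Ideal T) with hq
        have hpq : p ≤ q := Ideal.pow_le_pow_right (Nat.le_succ i)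
        set N : Submodule T (T ⧸ p) := q.map p.mkQ with hN
        have e : ((T ⧸ p) ⧸ N) ≃ₗ[T] T ⧸ q :=
          Submodule.quotientQuotientEquivQuotient p q hpq
        have hQN : IsArtinian T ((T ⧸ p) ⧸ N) := isArtinian_of_linearEquiv e.symm
        -- N is torsion by m
        have htor : Module.IsTorsionBySet T N (m : Set T) := by
          rintro ⟨n, hn⟩ ⟨a, ha⟩
          obtain ⟨y, hy, rfl⟩ := hn
          have hmem : a * y ∈ m * m ^ i := Ideal.mul_mem_mul ha hy
          rw [← pow_succ'] at hmem
          ext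
          show a • (p.mkQ y) = 0
          rw [← map_smul, smul_eq_mul]
          exact (Submodule.Quotient.mk_eq_zero p).mpr hmem
        letI : Module (T ⧸ m) N := htor.module
        haveI : IsScalarTower T (T ⧸ m) N := htor.isScalarTower
        have hfgN : N.FG := IsNoetherian.noetherian N
        haveI : Module.Finite T N := Module.Finite.iff_fg.mpr hfgN
        haveI : Module.Finite (T ⧸ m) N := Module.Finite.of_restrictScalars_finite T (T ⧸ m) N
        letI : Field (T ⧸ m) := Ideal.Quotient.field m
        haveI hA : IsArtinian (T ⧸ m) N := inferInstance
        have hAN : IsArtinian T N := by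
          let e : Submodule T N ↪o Submodule (T ⧸ m) N :=
            { toFun := fun P =>
                { carrier := P
                  add_mem' := fun ha hb => P.add_mem ha hb
                  zero_mem' := P.zero_mem
                  smul_mem' := by
                    rintro c x hx
                    obtain ⟨t, rfl⟩ := Ideal.Quotient.mk_surjective c
                    rw [htor.mk_smul]
                    exact P.smul_mem t hx }
              inj' := by
                intro P Q h
                ext x
                exact ⟨fun hx => by exact congrArg (x ∈ ·) (congrArg SetLike.coe h) ▸ hx,
                  fun hx => by exact (congrArg (x ∈ ·) (congrArg SetLike.coe h)).symm ▸ hx⟩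
              map_rel_iff' := Iff.rfl }
          exact ⟨e.wellFounded hA.wf⟩
        exact (isArtinian_iff_submodule_quotient N).mpr ⟨hAN, hQN⟩
  have := key k
  rw [hk] at this
  exact isArtinian_of_linearEquiv (Submodule.quotEquivOfEqBot (⊥ : Ideal T) rfl)

/-- **Krull's principal ideal theorem**: a prime minimal over a principal ideal
has height at most one. -/
lemma pit {R : Type*} [CommRing R] [IsNoetherianRing R] {x : R} {P : Ideal R}
    (hP : P ∈ (Ideal.span {x}).minimalPrimes) {q' q : Ideal R} (hq' : q'.IsPrime)
    (hq : q.IsPrime) (h1 : q' < q) (h2 : q < P) : False := by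
  haveI hPp : P.IsPrime := hP.1.1
  have hxP : Ideal.span {x} ≤ P := hP.1.2
  set S := Localization.AtPrime P with hS
  set f := algebraMap R S with hf
  haveI hSN : IsNoetherianRing S := IsLocalization.isNoetherianRing P.primeCompl S ‹_›
  set M := IsLocalRing.maximalIdeal S with hM
  have hcomapM : M.comap f = P := IsLocalization.AtPrime.comap_maximalIdeal S P
  have hmapP : Ideal.map f P = M := Localization.AtPrime.map_eq_maximalIdeal
  -- the primes q' < q < P in the localization
  have hdisj : ∀ {r : Ideal R}, r ≤ P → Disjoint (P.primeCompl : Set R) (r : Set R) :=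
    fun {r} hr => Set.disjoint_left.mpr fun a ha har => ha (hr har)
  set Q : Ideal S := Ideal.map f q with hQdef
  set Q' : Ideal S := Ideal.map f q' with hQ'def
  haveI hQ : Q.IsPrime :=
    IsLocalization.isPrime_of_isPrime_disjoint P.primeCompl S q hq (hdisj h2.le)
  haveI hQ' : Q'.IsPrime :=
    IsLocalization.isPrime_of_isPrime_disjoint P.primeCompl S q' hq' (hdisj (h1.trans h2).le)
  have hcomapQ : Q.comap f = q :=
    IsLocalization.under_map_of_isPrime_disjoint P.primeCompl S hq (hdisj h2.le)
  have hcomapQ' : Q'.comap f = q' :=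
    IsLocalization.under_map_of_isPrime_disjoint P.primeCompl S hq' (hdisj (h1.trans h2).le)
  have hQ'Q : Q' < Q := by
    refine lt_of_le_of_ne (Ideal.map_mono h1.le) fun h => h1.ne ?_
    have := congrArg (Ideal.comap f) h
    rwa [hcomapQ', hcomapQ] at this
  have hQM : Q < M := by
    refine lt_of_le_of_ne (hmapP ▸ Ideal.map_mono h2.le) fun h => h2.ne ?_
    have := congrArg (Ideal.comap f) h
    rwa [hcomapQ, hcomapM] at this
  set x' := f x with hx'
  have hx'M : x' ∈ M := by
    rw [← hcomapM] at hxP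
    exact hxP (Ideal.mem_span_singleton_self x)
  -- the radical of (x') is M
  have hrad : (Ideal.span {x'}).radical = M := by
    rw [Ideal.radical_eq_sInf]
    apply le_antisymm
    · exact sInf_le ⟨by rwa [Ideal.span_singleton_le_iff_mem], inferInstance⟩
    · refine le_sInf fun J hJ => ?_
      haveI := hJ.2
      have hJM : J ≤ M := IsLocalRing.le_maximalIdeal hJ.2.ne_top
      have hcj : Ideal.span {x} ≤ J.comap f := by
        rw [Ideal.span_singleton_le_iff_mem]
        exact hJ.1 (Ideal.mem_span_singleton_self x')
      have hjP : J.comap f ≤ P := le_trans (Ideal.comap_mono hJM) hcomapM.le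
      have hPj : P ≤ J.comap f := hP.2 ⟨Ideal.comap_isPrime f J, hcj⟩ hjP
      calc M = Ideal.map f P := hmapP.symm
        _ ≤ Ideal.map f (J.comap f) := Ideal.map_mono hPj
        _ ≤ J := Ideal.map_le_iff_le_comap.mpr le_rfl
  -- M^k ≤ (x')
  obtain ⟨k, hk⟩ : ∃ k, M ^ k ≤ Ideal.span {x'} := by
    obtain ⟨k, hk⟩ := Ideal.exists_radical_pow_le_of_fg (Ideal.span {x'})
      (hrad ▸ IsNoetherian.noetherian M)
    exact ⟨k, by rwa [hrad] at hk⟩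
  -- S/(x') is Artinian
  set T := S ⧸ Ideal.span {x'} with hT
  set mk' := Ideal.Quotient.mk (Ideal.span {x'}) with hmk
  have hx'leM : Ideal.span {x'} ≤ M := by rwa [Ideal.span_singleton_le_iff_mem]
  have hm'max : (M.map mk').IsMaximal := by
    apply Ideal.Quotient.maximal_of_isField
    refine MulEquiv.isField (B := S ⧸ M) ?_ ?_
    · letI : Field (S ⧸ M) := Ideal.Quotient.field M
      exact Field.toIsField _
    · exact (DoubleQuot.quotQuotEquivQuotOfLE hx'leM).toMulEquiv
  have hm'nil : (M.map mk') ^ k = ⊥ := by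
    rw [← Ideal.map_pow]
    refine le_bot_iff.mp ?_
    calc Ideal.map mk' (M ^ k) ≤ Ideal.map mk' (Ideal.span {x'}) := Ideal.map_mono hk
      _ = ⊥ := Ideal.map_quotient_self _
  haveI hTart : IsArtinianRing T := artinianOfNilpotentMax (M.map mk') hm'max k hm'nil
  -- symbolic powers of Q
  set A := Localization.AtPrime Q with hA
  set g := algebraMap S A with hg
  haveI hAN : IsNoetherianRing A := IsLocalization.isNoetherianRing Q.primeCompl A ‹_›
  set MQ : Ideal A := Ideal.map g Q with hMQ
  set w : ℕ → Ideal S := fun n => (MQ ^ n).comap g with hw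
  have hwanti : ∀ {a b : ℕ}, a ≤ b → w b ≤ w a :=
    fun {a b} hab => Ideal.comap_mono (Ideal.pow_le_pow_right hab)
  -- the chain stabilizes
  obtain ⟨n, hn⟩ : ∃ n, (w n).map mk' = (w (n + 1)).map mk' := by
    have hmono : Monotone (fun n => OrderDual.toDual ((w n).map mk')) := by
      intro a b hab
      exact Ideal.map_mono (hwanti hab)
    obtain ⟨n, hn⟩ := IsArtinian.monotone_stabilizes (R := T) (M := T) ⟨_, hmono⟩
    exact ⟨n, hn (n + 1) (Nat.le_succ n)⟩
  have hstab : w n ⊔ Ideal.span {x'} = w (n + 1) ⊔ Ideal.span {x'} := by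
    have h1' := congrArg (Ideal.comap mk') hn
    rwa [Ideal.comap_map_of_surjective mk' Ideal.Quotient.mk_surjective,
      Ideal.comap_map_of_surjective mk' Ideal.Quotient.mk_surjective,
      ← RingHom.ker_eq_comap_bot, Ideal.mk_ker] at h1'
  -- x' not in Q
  have hx'Q : x' ∉ Q := by
    intro hmem
    have hMQle : M ≤ Q := by
      rw [← hrad, ← hQ.radical]
      exact Ideal.radical_mono ((Ideal.span_singleton_le_iff_mem Q).mpr hmem)
    exact absurd hMQle hQM.not_ge
  -- the key containment for Nakayama
  have hstep : w n ≤ w (n + 1) ⊔ M • (w n) := by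
    intro a ha
    have ha' : a ∈ w (n + 1) ⊔ Ideal.span {x'} := by
      rw [← hstab]
      exact Submodule.mem_sup_left ha
    obtain ⟨b, hb, c', hc', rfl⟩ := Submodule.mem_sup.mp ha'
    obtain ⟨c, rfl⟩ := Ideal.mem_span_singleton'.mp hc'
    have hcx : c * x' ∈ w n := by
      have h3 : (b + c * x') - b ∈ w n :=
        Submodule.sub_mem _ ha (hwanti (Nat.le_succ n) hb)
      simpa using h3
    have hc : c ∈ w n := by
      have hu : IsUnit (g x') := IsLocalization.map_units (M := Q.primeCompl) A ⟨x', hx'Q⟩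
      have h4 : g c * g x' ∈ MQ ^ n := by
        rw [← _root_.map_mul]; exact hcx
      rw [mul_comm] at h4
      exact (Ideal.unit_mul_mem_iff_mem _ hu).mp h4
    refine Submodule.add_mem _ (Submodule.mem_sup_left hb) (Submodule.mem_sup_right ?_)
    rw [Ideal.smul_eq_mul, mul_comm c x']
    exact Ideal.mul_mem_mul hx'M hc
  -- Nakayama in S
  have hIN : M • (w n) ≤ w (n + 1) :=
    Submodule.smul_le_of_le_smul_of_le_jacobson_bot (IsNoetherian.noetherian (w n))
      (IsLocalRing.maximalIdeal_le_jacobson ⊥) hstep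
  have hwn : w n = w (n + 1) :=
    le_antisymm (hstep.trans (sup_le le_rfl hIN)) (hwanti (Nat.le_succ n))
  have hMQn : MQ ^ n = MQ ^ (n + 1) := by
    have h4 := congrArg (Ideal.map g) hwn
    rwa [IsLocalization.map_comap Q.primeCompl A, IsLocalization.map_comap Q.primeCompl A] at h4
  -- Nakayama in A
  have hMQmax : MQ = IsLocalRing.maximalIdeal A := Localization.AtPrime.map_eq_maximalIdeal
  have hbot : MQ ^ n = ⊥ := by
    apply Submodule.eq_bot_of_le_smul_of_le_jacobson_bot MQ (MQ ^ n)
      (IsNoetherian.noetherian _)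
    · rw [Ideal.smul_eq_mul, ← pow_succ']
      exact hMQn.le
    · rw [hMQmax]
      exact IsLocalRing.maximalIdeal_le_jacobson ⊥
  -- contradiction using Q' < Q
  have hdisj2 : Disjoint (Q.primeCompl : Set S) (Q' : Set S) :=
    Set.disjoint_left.mpr fun a ha har => ha (hQ'Q.le har)
  have hdisj3 : Disjoint (Q.primeCompl : Set S) (Q : Set S) :=
    Set.disjoint_left.mpr fun a ha har => ha har
  haveI hJp : (Ideal.map g Q').IsPrime :=
    IsLocalization.isPrime_of_isPrime_disjoint Q.primeCompl A Q' hQ' hdisj2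
  have hle : MQ ≤ Ideal.map g Q' := hJp.le_of_pow_le (hbot ▸ bot_le)
  have hcontr : Q ≤ Q' := by
    have h5 := Ideal.comap_mono (f := g) hle
    rwa [show Ideal.comap g (Ideal.map g Q) = Q from IsLocalization.under_map_of_isPrime_disjoint Q.primeCompl A hQ hdisj3,
      show Ideal.comap g (Ideal.map g Q') = Q' from IsLocalization.under_map_of_isPrime_disjoint Q.primeCompl A hQ' hdisj2] at h5
  exact absurd hcontr hQ'Q.not_ge

/-- Points of the spectrum minimal over a principal ideal have height at most one. -/
lemma height_le_one_of_minimal {R : Type u} [CommRing R] [IsNoetherianRing R] {x : R}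
    {Q : PrimeSpectrum R} (hQ : Q.asIdeal ∈ (Ideal.span {x}).minimalPrimes) :
    Order.height Q ≤ 1 := by
  apply Order.height_le
  intro p hlast
  by_contra hlen
  have h2 : 2 ≤ p.length := by
    rcases Nat.lt_or_ge p.length 2 with h | h
    · interval_cases hl : p.length <;> simp_all <;> omega
    · exact h
  have hi1 : p.length - 2 < p.length - 1 := by omega
  have hi2 : p.length - 1 < p.length := by omega
  set a := p ⟨p.length - 2, by omega⟩ with ha
  set b := p ⟨p.length - 1, by omega⟩ with hb
  set c := p ⟨p.length, by omega⟩ with hc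
  have hab : a < b := p.strictMono (by simp [Fin.lt_def]; omega)
  have hbc : b < c := p.strictMono (by simp [Fin.lt_def]; omega)
  have hcQ : c = Q := by
    rw [← hlast]; rfl
  rw [hcQ] at hbc
  exact pit hQ a.isPrime b.isPrime ((PrimeSpectrum.asIdeal_lt_asIdeal a b).mpr hab)
    ((PrimeSpectrum.asIdeal_lt_asIdeal b Q).mpr hbc)



/-- If `R` is a Noetherian commutative ring with `Spec R` infinite, then
`Spec R` has the same cardinality as its subset of height-one primes. -/
theorem stmt_16 {R : Type u} [CommRing R] [IsNoetherianRing R]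
    (hinf : Infinite (PrimeSpectrum R)) :
    Cardinal.mk (PrimeSpectrum R) =
      Cardinal.mk {P : PrimeSpectrum R // Order.height P = 1} := by
  classical
  -- every prime is the supremum of finitely many primes of height at most one
  have key : ∀ P : PrimeSpectrum R, ∃ s : Finset {Q : PrimeSpectrum R // Order.height Q ≤ 1},
      P.asIdeal = s.sup (fun Q => Q.1.asIdeal) := by
    intro P
    obtain ⟨s, hs⟩ : P.asIdeal.FG := IsNoetherian.noetherian P.asIdeal
    have hex : ∀ a ∈ s, ∃ Q : {Q : PrimeSpectrum R // Order.height Q ≤ 1},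
        a ∈ Q.1.asIdeal ∧ Q.1.asIdeal ≤ P.asIdeal := by
      intro a ha
      have hle : Ideal.span {a} ≤ P.asIdeal := by
        rw [Ideal.span_singleton_le_iff_mem, ← hs]
        exact Ideal.subset_span ha
      obtain ⟨p, hp, hpP⟩ := Ideal.exists_minimalPrimes_le hle
      haveI hpp : p.IsPrime := hp.1.1
      refine ⟨⟨⟨p, hpp⟩, height_le_one_of_minimal hp⟩, ?_, hpP⟩
      exact hp.1.2 (Ideal.mem_span_singleton_self a)
    choose! f hf1 hf2 using hex
    refine ⟨s.attach.image (fun a => f a.1 a.2), ?_⟩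
    apply le_antisymm
    · rw [← hs, Ideal.span_le]
      intro a ha
      have hmem : f a ha ∈ s.attach.image (fun a => f a.1 a.2) :=
        Finset.mem_image.mpr ⟨⟨a, ha⟩, Finset.mem_attach _ _, rfl⟩
      have hle := Finset.le_sup (f := fun (Q : {Q : PrimeSpectrum R // Order.height Q ≤ 1}) =>
        Q.1.asIdeal) hmem
      exact hle (hf1 a ha)
    · refine Finset.sup_le ?_
      rintro Q hQ
      obtain ⟨⟨a, ha⟩, -, rfl⟩ := Finset.mem_image.mp hQ
      exact hf2 a ha
  choose F hF using key
  have hFinj : Function.Injective F := by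
    intro P P' h
    exact PrimeSpectrum.ext (by rw [hF P, hF P', h])
  -- the set of height ≤ 1 primes is infinite
  haveI hHinf : Infinite {Q : PrimeSpectrum R // Order.height Q ≤ 1} := by
    by_contra hfin
    rw [not_infinite_iff_finite] at hfin
    haveI := hfin
    haveI := Fintype.ofFinite {Q : PrimeSpectrum R // Order.height Q ≤ 1}
    haveI : Finite (PrimeSpectrum R) := Finite.of_injective F hFinj
    exact not_finite (PrimeSpectrum R)
  -- split into height 0 and height 1
  have hsplit : {Q : PrimeSpectrum R | Order.height Q ≤ 1} ⊆
      {Q : PrimeSpectrum R | Order.height Q = 1} ∪ {Q : PrimeSpectrum R | Order.height Q = 0} := by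
    intro Q hQ
    rcases eq_or_ne (Order.height Q) 0 with h0 | h0
    · exact Or.inr h0
    · exact Or.inl (le_antisymm hQ (ENat.one_le_iff_ne_zero.mpr h0))
  have h0fin : {Q : PrimeSpectrum R | Order.height Q = 0}.Finite := by
    have : {Q : PrimeSpectrum R | Order.height Q = 0} = {Q : PrimeSpectrum R | IsMin Q} := by
      ext Q; simp [Order.height_eq_zero]
    rw [this]
    exact PrimeSpectrum.finite_setOf_isMin R
  -- the set of height 1 primes is infinite
  haveI h1inf : Infinite {Q : PrimeSpectrum R // Order.height Q = 1} := by
    rw [← not_finite_iff_infinite]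
    intro h1fin
    haveI : Finite ↥{Q : PrimeSpectrum R | Order.height Q = 1} := h1fin
    have hfin1 : {Q : PrimeSpectrum R | Order.height Q = 1}.Finite := Set.toFinite _
    have hU : {Q : PrimeSpectrum R | Order.height Q ≤ 1}.Finite :=
      Set.Finite.subset (hfin1.union h0fin) hsplit
    haveI : Finite {Q : PrimeSpectrum R // Order.height Q ≤ 1} := hU.to_subtype
    exact not_finite {Q : PrimeSpectrum R // Order.height Q ≤ 1}
  haveI h0sub : Finite {Q : PrimeSpectrum R // Order.height Q = 0} := h0fin.to_subtype
  -- cardinal computation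
  apply le_antisymm
  · calc Cardinal.mk (PrimeSpectrum R)
        ≤ Cardinal.mk (Finset {Q : PrimeSpectrum R // Order.height Q ≤ 1}) :=
          Cardinal.mk_le_of_injective hFinj
      _ = Cardinal.mk {Q : PrimeSpectrum R // Order.height Q ≤ 1} :=
          Cardinal.mk_finset_of_infinite _
      _ ≤ Cardinal.mk {Q : PrimeSpectrum R // Order.height Q = 1} +
            Cardinal.mk {Q : PrimeSpectrum R // Order.height Q = 0} := by
          refine le_trans (Cardinal.mk_le_mk_of_subset hsplit) (Cardinal.mk_union_le _ _)
      _ ≤ Cardinal.mk {Q : PrimeSpectrum R // Order.height Q = 1} := by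
          apply le_of_eq
          apply Cardinal.add_eq_left
          · exact Cardinal.infinite_iff.mp h1inf
          · refine le_trans (le_of_lt (Cardinal.lt_aleph0_of_finite _)) ?_
            · exact Cardinal.infinite_iff.mp h1inf
  · exact Cardinal.mk_le_of_injective (f := fun Q => Q.1) fun a b h => Subtype.ext h
end
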